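/- arXiv:1807.03502 — 4 statements merged into one kernel-verified Lean document; each statement's English description precedes it below -/
import Mathlib

section
/- For n ≥ 1 and l ≥ 3, the degree-2 graded component of L_{CR,l}(A) has complex dimension n², and the degree-3 graded component of L_{CR,l}(A) has complex dimension n³ + n². -/
noncomputable section

/-- The free complex Lie algebra on the ordered alphabet
`A = {z_1 < ⋯ < z_n < z̄_1 < ⋯ < z̄_n}`, realized as `Fin (2*n)` (the first `n` letters
are the unbarred ones `z_i`, the last `n` are the barred ones `z̄_i`, in the given
lexicographic order). -/
abbrev FLC (n : ℕ) := FreeLieAlgebra ℂ (Fin (2 * n))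

/-- The letter `x` is unbarred (i.e. one of the `z_i`). -/
def Unbarred (n : ℕ) (x : Fin (2 * n)) : Prop := (x : ℕ) < n

/-- The relations: all `[z_i, z_j]` and all `[z̄_i, z̄_j]`. -/
def crRels (n : ℕ) : Set (FLC n) :=
  {x | ∃ i j : Fin (2 * n), Unbarred n i ∧ Unbarred n j ∧
    x = ⁅FreeLieAlgebra.of ℂ i, FreeLieAlgebra.of ℂ j⁆} ∪
  {x | ∃ i j : Fin (2 * n), ¬Unbarred n i ∧ ¬Unbarred n j ∧
    x = ⁅FreeLieAlgebra.of ℂ i, FreeLieAlgebra.of ℂ j⁆}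

/-- The Lie ideal generated by the relations together with all elements of degree
greater than `l` (the latter form the `(l+1)`-st term of the lower central series). -/
def crIdeal (n l : ℕ) : LieIdeal ℂ (FLC n) :=
  LieSubmodule.lieSpan ℂ (FLC n) (crRels n) ⊔
    LieModule.lowerCentralSeries ℂ (FLC n) (FLC n) l

/-- The quotient Lie algebra `L_{CR,l}(A)`. -/
abbrev LCR (n l : ℕ) := FLC n ⧸ crIdeal n l

/-- The projection `L(A) → L_{CR,l}(A)`. -/
def crMk (n l : ℕ) : FLC n →ₗ⁅ℂ, FLC n⁆ LCR n l := LieSubmodule.Quotient.mk' (crIdeal n l)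

/-- A Lyndon word over the ordered alphabet: a nonempty word strictly smaller, in the
lexicographic order, than all of its proper cyclic rotations. -/
def IsLyndon (n : ℕ) (w : List (Fin (2 * n))) : Prop :=
  w ≠ [] ∧ ∀ k : ℕ, 0 < k → k < w.length → List.Lex (· < ·) w (w.rotate k)

/-- `IsStd n w b` : `b = B(w)` is the standard bracketing of the Lyndon word `w`:
`B(w) = w` for a single letter, and `B(uv) = [B(u), B(v)]` where `uv` is the
factorization of `w` into a concatenation of Lyndon words `u, v` with `v` of maximal
possible length. -/
inductive IsStd (n : ℕ) : List (Fin (2 * n)) → FreeLieAlgebra ℂ (Fin (2 * n)) → Prop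
  | single (x : Fin (2 * n)) : IsStd n [x] (FreeLieAlgebra.of ℂ x)
  | node (u v : List (Fin (2 * n))) (bu bv : FreeLieAlgebra ℂ (Fin (2 * n))) :
      IsLyndon n u → IsLyndon n v →
      (∀ u' v' : List (Fin (2 * n)), u ++ v = u' ++ v' →
        IsLyndon n u' → IsLyndon n v' → v'.length ≤ v.length) →
      IsStd n u bu → IsStd n v bv → IsStd n (u ++ v) ⁅bu, bv⁆

/-- A Lyndon word is admissible if (1) it begins with an unbarred letter and every
maximal block of consecutive unbarred letters is nondecreasing, and (2) it ends with a
barred letter and every maximal block of consecutive barred letters is nonincreasing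
(the block conditions being recorded through consecutive pairs of equal type). -/
def Admissible (n : ℕ) (w : List (Fin (2 * n))) : Prop :=
  (∃ x, w.head? = some x ∧ Unbarred n x) ∧
  (∃ x, w.getLast? = some x ∧ ¬Unbarred n x) ∧
  (∀ (k : ℕ) (hk : k + 1 < w.length),
    (Unbarred n (w[k]'(by omega)) → Unbarred n (w[k + 1]'hk) →
      w[k]'(by omega) ≤ w[k + 1]'hk) ∧
    (¬Unbarred n (w[k]'(by omega)) → ¬Unbarred n (w[k + 1]'hk) →
      w[k + 1]'hk ≤ w[k]'(by omega)))

/-- The graded component of degree `i` of `L_{CR,l}(A)`: the span of the images of the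
iterated brackets of `i` letters. -/
def LCRgrade (n l : ℕ) : ℕ → Submodule ℂ (LCR n l)
  | 0 => ⊥
  | 1 => Submodule.span ℂ
      (Set.range fun x : Fin (2 * n) => crMk n l (FreeLieAlgebra.of ℂ x))
  | (i + 2) => Submodule.span ℂ
      {z | ∃ x ∈ LCRgrade n l 1, ∃ y ∈ LCRgrade n l (i + 1), z = ⁅x, y⁆}

namespace CRAux

variable (n : ℕ)

abbrev G1 := (Fin n → ℂ) × (Fin n → ℂ)
abbrev G2 := Fin n → Fin n → ℂ
abbrev G3 := (Fin n → Fin n → Fin n → ℂ) × (Fin n → Fin n → Fin n → ℂ)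
abbrev G := G1 n × G2 n × G3 n

def bt (x y : G1 n) : G2 n := fun a b => x.1 a * y.2 b - y.1 a * x.2 b

def gm (x : G1 n) (M : G2 n) : G3 n :=
  (fun a b c => x.1 a * M b c + x.1 b * M a c,
   fun a b c => x.2 a * M b c + x.2 c * M b a)

instance : Bracket (G n) (G n) :=
  ⟨fun x y => (0, bt n x.1 y.1, gm n x.1 y.2.1 - gm n y.1 x.2.1)⟩

variable {n}

lemma gbr_def (x y : G n) :
    ⁅x, y⁆ = ((0 : G1 n), bt n x.1 y.1, gm n x.1 y.2.1 - gm n y.1 x.2.1) := rfl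

lemma G_ext {x y : G n} (h11 : ∀ a, x.1.1 a = y.1.1 a) (h12 : ∀ a, x.1.2 a = y.1.2 a)
    (h2 : ∀ a b, x.2.1 a b = y.2.1 a b)
    (h31 : ∀ a b c, x.2.2.1 a b c = y.2.2.1 a b c)
    (h32 : ∀ a b c, x.2.2.2 a b c = y.2.2.2 a b c) : x = y := by
  obtain ⟨⟨x1, x2⟩, x3, x4, x5⟩ := x; obtain ⟨⟨y1, y2⟩, y3, y4, y5⟩ := y
  simp only [Prod.mk.injEq]
  exact ⟨⟨funext h11, funext h12⟩, funext fun a => funext (h2 a),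
    funext fun a => funext fun b => funext (h31 a b),
    funext fun a => funext fun b => funext (h32 a b)⟩

variable (n)

instance : LieRing (G n) where
  add_lie x y z := by
    refine G_ext ?_ ?_ ?_ ?_ ?_ <;> intros <;> simp [gbr_def, bt, gm] <;> ring
  lie_add x y z := by
    refine G_ext ?_ ?_ ?_ ?_ ?_ <;> intros <;> simp [gbr_def, bt, gm] <;> ring
  lie_self x := by
    refine G_ext ?_ ?_ ?_ ?_ ?_ <;> intros <;> simp [gbr_def, bt, gm]
  leibniz_lie x y z := by
    refine G_ext ?_ ?_ ?_ ?_ ?_ <;> intros <;> simp [gbr_def, bt, gm] <;> try ring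

instance : LieAlgebra ℂ (G n) where
  lie_smul c x y := by
    refine G_ext ?_ ?_ ?_ ?_ ?_ <;> intros <;> simp [gbr_def, bt, gm] <;> try ring

/-- delta function -/
def E (k : ℕ) : Fin n → ℂ := fun a => if (a : ℕ) = k then 1 else 0

def genG (x : Fin (2 * n)) : G n :=
  if (x : ℕ) < n then ((E n x, 0), 0, 0) else ((0, E n ((x : ℕ) - n)), 0, 0)

def φ : FLC n →ₗ⁅ℂ⁆ G n := FreeLieAlgebra.lift ℂ (genG n)

/-- elements with vanishing first component -/
def J2 : LieIdeal ℂ (G n) where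
  carrier := {x | x.1 = 0}
  add_mem' := by
    intro a b ha hb
    simp only [Set.mem_setOf_eq] at *
    rw [Prod.fst_add, ha, hb, add_zero]
  zero_mem' := rfl
  smul_mem' := by
    intro c a ha
    simp only [Set.mem_setOf_eq, SetLike.mem_coe] at *
    rw [Prod.smul_fst, ha, smul_zero]
  lie_mem := by intro x m _; rfl

def J3 : LieIdeal ℂ (G n) where
  carrier := {x | x.1 = 0 ∧ x.2.1 = 0}
  add_mem' := by
    intro a b ha hb
    simp only [Set.mem_setOf_eq] at *
    rw [Prod.fst_add, Prod.snd_add, Prod.fst_add, ha.1, hb.1, ha.2, hb.2]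
    simp
  zero_mem' := ⟨rfl, rfl⟩
  smul_mem' := by
    intro c a ha
    simp only [Set.mem_setOf_eq, SetLike.mem_coe] at *
    rw [Prod.smul_fst, Prod.smul_snd, Prod.smul_fst, ha.1, ha.2]
    simp
  lie_mem := by
    intro x m hm
    simp only [Set.mem_setOf_eq] at *
    refine ⟨rfl, ?_⟩
    have : m.1 = 0 := hm.1
    show bt n x.1 m.1 = 0
    rw [this]
    funext a b
    simp [bt]

lemma lcs3_eq_bot : LieModule.lowerCentralSeries ℂ (G n) (G n) 3 = ⊥ := by
  have h1 : LieModule.lowerCentralSeries ℂ (G n) (G n) 1 ≤ J2 n := by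
    rw [LieModule.lowerCentralSeries_succ]
    rw [LieSubmodule.lie_le_iff]
    intro x _ m _
    exact rfl
  have h2 : LieModule.lowerCentralSeries ℂ (G n) (G n) 2 ≤ J3 n := by
    rw [LieModule.lowerCentralSeries_succ]
    refine le_trans (LieSubmodule.mono_lie_right _ h1) ?_
    rw [LieSubmodule.lie_le_iff]
    intro x _ m hm
    refine ⟨rfl, ?_⟩
    have : m.1 = 0 := hm
    show bt n x.1 m.1 = 0
    rw [this]; funext a b; simp [bt]
  rw [eq_bot_iff, show (3:ℕ) = 2 + 1 from rfl, LieModule.lowerCentralSeries_succ]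
  refine le_trans (LieSubmodule.mono_lie_right _ h2) ?_
  rw [LieSubmodule.lie_le_iff]
  intro x _ m hm
  obtain ⟨hm1, hm2⟩ : m.1 = 0 ∧ m.2.1 = 0 := hm
  have : ⁅x, m⁆ = 0 := by
    rw [gbr_def, hm1, hm2]
    refine G_ext ?_ ?_ ?_ ?_ ?_ <;> intros <;> simp [bt, gm]
  rw [this]; exact (⊥ : LieIdeal ℂ (G n)).zero_mem

lemma phi_of (x : Fin (2 * n)) : φ n (FreeLieAlgebra.of ℂ x) = genG n x :=
  FreeLieAlgebra.lift_of_apply _ _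

lemma ideal_le_ker {l : ℕ} (hl : 3 ≤ l) : crIdeal n l ≤ (φ n).ker := by
  rw [crIdeal]
  apply sup_le
  · rw [LieSubmodule.lieSpan_le]
    rintro x (⟨i, j, hi, hj, rfl⟩ | ⟨i, j, hi, hj, rfl⟩) <;>
    · rw [SetLike.mem_coe, LieHom.mem_ker, LieHom.map_lie, phi_of, phi_of, genG, genG]
      unfold Unbarred at hi hj
      simp only [hi, hj, if_true, if_false, if_neg, gbr_def]
      refine G_ext ?_ ?_ ?_ ?_ ?_ <;> intros <;> simp [bt, gm]
  · intro x hx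
    have hx3 : x ∈ LieModule.lowerCentralSeries ℂ (FLC n) (FLC n) 3 :=
      LieModule.antitone_lowerCentralSeries ℂ (FLC n) (FLC n) hl hx
    rw [LieHom.mem_ker]
    have : φ n x ∈ LieIdeal.map (φ n) (LieModule.lowerCentralSeries ℂ (FLC n) (FLC n) 3) :=
      LieIdeal.mem_map hx3
    have h2 := LieIdeal.map_lowerCentralSeries_le (R := ℂ) 3 (f := φ n) this
    rw [lcs3_eq_bot] at h2
    exact h2

def phibar (l : ℕ) (hl : 3 ≤ l) : LCR n l →ₗ[ℂ] G n :=
  Submodule.liftQ (crIdeal n l).toSubmodule (φ n).toLinearMap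
    (fun x hx => by exact ideal_le_ker n hl hx)

lemma phibar_mk (l : ℕ) (hl : 3 ≤ l) (x : FLC n) :
    phibar n l hl (crMk n l x) = φ n x := rfl

end CRAux

noncomputable section
namespace CRAux

variable (n l : ℕ)

def gen (a : Fin (2 * n)) : LCR n l := crMk n l (FreeLieAlgebra.of ℂ a)

def brL : LCR n l →ₗ[ℂ] LCR n l →ₗ[ℂ] LCR n l :=
  LinearMap.mk₂ ℂ (fun x y => ⁅x, y⁆) add_lie smul_lie lie_add lie_smul

lemma span_bracket (S T : Set (LCR n l)) :
    Submodule.span ℂ {z | ∃ x ∈ Submodule.span ℂ S, ∃ y ∈ Submodule.span ℂ T, z = ⁅x, y⁆}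
      = Submodule.span ℂ {z | ∃ x ∈ S, ∃ y ∈ T, z = ⁅x, y⁆} := by
  have key : ∀ (p q : Submodule ℂ (LCR n l)),
      {z | ∃ x ∈ p, ∃ y ∈ q, z = ⁅x, y⁆} =
        Set.image2 (fun x y => brL n l x y) (p : Set (LCR n l)) q := by
    intro p q
    ext z
    simp only [Set.mem_setOf_eq, Set.mem_image2, SetLike.mem_coe, LinearMap.mk₂_apply, brL,
      eq_comm]
  have key2 : {z | ∃ x ∈ S, ∃ y ∈ T, z = ⁅x, y⁆} =
      Set.image2 (fun x y => brL n l x y) S T := by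
    ext z
    simp only [Set.mem_setOf_eq, Set.mem_image2, LinearMap.mk₂_apply, brL, eq_comm]
  rw [key, key2, ← Submodule.map₂_eq_span_image2 (brL n l) (Submodule.span ℂ S)
    (Submodule.span ℂ T), Submodule.map₂_span_span]

lemma grade1_eq : LCRgrade n l 1 = Submodule.span ℂ (Set.range (gen n l)) := by
  rw [LCRgrade]; rfl

lemma grade2_eq' : LCRgrade n l 2 =
    Submodule.span ℂ {z | ∃ x ∈ Set.range (gen n l), ∃ y ∈ Set.range (gen n l), z = ⁅x, y⁆} := by
  have : LCRgrade n l 2 =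
      Submodule.span ℂ {z | ∃ x ∈ LCRgrade n l 1, ∃ y ∈ LCRgrade n l 1, z = ⁅x, y⁆} := by
    show LCRgrade n l (0 + 2) = _
    conv_lhs => rw [LCRgrade]
  rw [this, grade1_eq, span_bracket]


def emb1 (i : Fin n) : Fin (2 * n) := ⟨i, by have := i.isLt; omega⟩
def emb2 (j : Fin n) : Fin (2 * n) := ⟨n + j, by have := j.isLt; omega⟩

def v (p : Fin n × Fin n) : LCR n l := ⁅gen n l (emb1 n p.1), gen n l (emb2 n p.2)⁆

lemma gen_bracket (a b : Fin (2 * n)) :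
    (⁅gen n l a, gen n l b⁆ : LCR n l)
      = crMk n l ⁅FreeLieAlgebra.of ℂ a, FreeLieAlgebra.of ℂ b⁆ := rfl

lemma relz (a b : Fin (2 * n)) (ha : (a : ℕ) < n) (hb : (b : ℕ) < n) :
    (⁅gen n l a, gen n l b⁆ : LCR n l) = 0 := by
  rw [gen_bracket]
  rw [show crMk n l ⁅FreeLieAlgebra.of ℂ a, FreeLieAlgebra.of ℂ b⁆
      = LieSubmodule.Quotient.mk (N := crIdeal n l)
        ⁅FreeLieAlgebra.of ℂ a, FreeLieAlgebra.of ℂ b⁆ from rfl]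
  rw [LieSubmodule.Quotient.mk_eq_zero']
  exact (le_sup_left : LieSubmodule.lieSpan ℂ (FLC n) (crRels n) ≤ crIdeal n l)
    (LieSubmodule.subset_lieSpan (Or.inl ⟨a, b, ha, hb, rfl⟩))

lemma relzbar (a b : Fin (2 * n)) (ha : ¬ (a : ℕ) < n) (hb : ¬ (b : ℕ) < n) :
    (⁅gen n l a, gen n l b⁆ : LCR n l) = 0 := by
  rw [gen_bracket]
  rw [show crMk n l ⁅FreeLieAlgebra.of ℂ a, FreeLieAlgebra.of ℂ b⁆
      = LieSubmodule.Quotient.mk (N := crIdeal n l)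
        ⁅FreeLieAlgebra.of ℂ a, FreeLieAlgebra.of ℂ b⁆ from rfl]
  rw [LieSubmodule.Quotient.mk_eq_zero']
  exact (le_sup_left : LieSubmodule.lieSpan ℂ (FLC n) (crRels n) ≤ crIdeal n l)
    (LieSubmodule.subset_lieSpan (Or.inr ⟨a, b, ha, hb, rfl⟩))

lemma grade2_eq : LCRgrade n l 2 = Submodule.span ℂ (Set.range (v n l)) := by
  rw [grade2_eq']
  apply le_antisymm
  · rw [Submodule.span_le]
    rintro z ⟨x, ⟨a, rfl⟩, y, ⟨b, rfl⟩, rfl⟩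
    by_cases ha : (a : ℕ) < n <;> by_cases hb : (b : ℕ) < n
    · rw [relz n l a b ha hb]; exact Submodule.zero_mem _
    · have hab : a = emb1 n ⟨(a : ℕ), ha⟩ := Fin.ext rfl
      have hbb : b = emb2 n ⟨(b : ℕ) - n, by have := b.isLt; omega⟩ := by
        apply Fin.ext; show (b : ℕ) = n + ((b : ℕ) - n); omega
      refine Submodule.subset_span
        ⟨(⟨(a : ℕ), ha⟩, ⟨(b : ℕ) - n, by have := b.isLt; omega⟩), ?_⟩
      rw [v, ← hab, ← hbb]
    · have hab : b = emb1 n ⟨(b : ℕ), hb⟩ := Fin.ext rfl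
      have hbb : a = emb2 n ⟨(a : ℕ) - n, by have := a.isLt; omega⟩ := by
        apply Fin.ext; show (a : ℕ) = n + ((a : ℕ) - n); omega
      rw [← lie_skew]
      refine Submodule.neg_mem _ (Submodule.subset_span
        ⟨(⟨(b : ℕ), hb⟩, ⟨(a : ℕ) - n, by have := a.isLt; omega⟩), ?_⟩)
      rw [v, ← hab, ← hbb]
    · rw [relzbar n l a b ha hb]; exact Submodule.zero_mem _
  · rw [Submodule.span_le]
    rintro z ⟨p, rfl⟩
    exact Submodule.subset_span
      ⟨gen n l (emb1 n p.1), ⟨_, rfl⟩, gen n l (emb2 n p.2), ⟨_, rfl⟩, rfl⟩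

def ev2 (i j : Fin n) : G n →ₗ[ℂ] ℂ where
  toFun x := x.2.1 i j
  map_add' _ _ := rfl
  map_smul' _ _ := rfl

def ev31 (k i j : Fin n) : G n →ₗ[ℂ] ℂ where
  toFun x := x.2.2.1 k i j
  map_add' _ _ := rfl
  map_smul' _ _ := rfl

def ev32 (k i j : Fin n) : G n →ₗ[ℂ] ℂ where
  toFun x := x.2.2.2 k i j
  map_add' _ _ := rfl
  map_smul' _ _ := rfl

lemma li_of_dual {ι : Type*} [Fintype ι] {M : Type*} [AddCommGroup M] [Module ℂ M]
    (u : ι → M) (f : ι → M →ₗ[ℂ] ℂ)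
    (hd : ∀ i, f i (u i) ≠ 0) (ho : ∀ i j, j ≠ i → f i (u j) = 0) :
    LinearIndependent ℂ u := by
  rw [Fintype.linearIndependent_iff]
  intro g hg i
  have h := congrArg (f i) hg
  rw [map_sum, map_zero] at h
  have h2 : ∑ j, g j * f i (u j) = 0 := by
    rw [← h]
    exact Finset.sum_congr rfl fun j _ => by rw [map_smul]; rfl
  rw [Finset.sum_eq_single i] at h2
  · exact (mul_eq_zero.mp h2).resolve_right (hd i)
  · intro b _ hb; rw [ho i b hb, mul_zero]
  · exact fun h' => absurd (Finset.mem_univ i) h'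

lemma genG_emb1 (i : Fin n) : genG n (emb1 n i) = ((E n ↑i, 0), 0, 0) := by
  simp [genG, emb1, i.isLt]

lemma genG_emb2 (j : Fin n) : genG n (emb2 n j) = ((0, E n ↑j), 0, 0) := by
  have h : ¬ (n + (j : ℕ) < n) := by omega
  simp [genG, emb2, h, Nat.add_sub_cancel_left]

variable {l} in
lemma phibar_v (hl : 3 ≤ l) (p : Fin n × Fin n) : phibar n l hl (v n l p) =
    ((0 : G1 n), (fun a b => E n ↑p.1 a * E n ↑p.2 b : G2 n), (0 : G3 n)) := by
  show phibar n l hl ⁅gen n l (emb1 n p.1), gen n l (emb2 n p.2)⁆ = _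
  rw [gen_bracket, phibar_mk, LieHom.map_lie, phi_of, phi_of, genG_emb1, genG_emb2, gbr_def]
  refine G_ext ?_ ?_ ?_ ?_ ?_ <;> intros <;> simp [bt, gm]

variable {l} in
lemma li_v (hl : 3 ≤ l) : LinearIndependent ℂ (v n l) := by
  apply LinearIndependent.of_comp (phibar n l hl)
  apply li_of_dual _ (fun p => ev2 n p.1 p.2)
  · intro p
    simp only [Function.comp_apply, phibar_v]
    show E n ↑p.1 p.1 * E n ↑p.2 p.2 ≠ 0
    simp [E]
  · intro p q hq
    simp only [Function.comp_apply, phibar_v]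
    show E n ↑q.1 p.1 * E n ↑q.2 p.2 = 0
    unfold E
    split_ifs with h1 h2
    · exfalso
      apply hq
      have e1 : q.1 = p.1 := Fin.val_injective h1.symm
      have e2 : q.2 = p.2 := Fin.val_injective h2.symm
      exact Prod.ext e1 e2
    all_goals simp

variable {l} in
lemma finrank_grade2 (hl : 3 ≤ l) : Module.finrank ℂ ↥(LCRgrade n l 2) = n ^ 2 := by
  rw [grade2_eq, finrank_span_eq_card (li_v n hl)]
  simp [sq]


lemma grade3_eq' : LCRgrade n l 3 =
    Submodule.span ℂ
      {z | ∃ x ∈ Set.range (gen n l), ∃ y ∈ Set.range (v n l), z = ⁅x, y⁆} := by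
  have : LCRgrade n l 3 =
      Submodule.span ℂ {z | ∃ x ∈ LCRgrade n l 1, ∃ y ∈ LCRgrade n l 2, z = ⁅x, y⁆} := by
    show LCRgrade n l (1 + 2) = _
    conv_lhs => rw [LCRgrade]
  rw [this, grade1_eq, grade2_eq, span_bracket]

lemma swap1 (k i j : Fin n) :
    (⁅gen n l (emb1 n k), v n l (i, j)⁆ : LCR n l) = ⁅gen n l (emb1 n i), v n l (k, j)⁆ := by
  have hab : (⁅gen n l (emb1 n k), gen n l (emb1 n i)⁆ : LCR n l) = 0 :=
    relz n l _ _ k.isLt i.isLt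
  show (⁅gen n l (emb1 n k), ⁅gen n l (emb1 n i), gen n l (emb2 n j)⁆⁆ : LCR n l)
    = ⁅gen n l (emb1 n i), ⁅gen n l (emb1 n k), gen n l (emb2 n j)⁆⁆
  rw [leibniz_lie, hab, zero_lie, zero_add]

lemma swap2 (k i j : Fin n) :
    (⁅gen n l (emb2 n k), v n l (i, j)⁆ : LCR n l) = ⁅gen n l (emb2 n j), v n l (i, k)⁆ := by
  set a := gen n l (emb2 n k) with ha'
  set b := gen n l (emb1 n i) with hb'
  set c := gen n l (emb2 n j) with hc'
  have hn2 : ¬ ((emb2 n k : Fin (2 * n)) : ℕ) < n := by simp [emb2]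
  have hn2' : ¬ ((emb2 n j : Fin (2 * n)) : ℕ) < n := by simp [emb2]
  have hac : ⁅a, c⁆ = 0 := relzbar n l _ _ hn2 hn2'
  have hca : ⁅c, a⁆ = 0 := relzbar n l _ _ hn2' hn2
  show (⁅a, ⁅b, c⁆⁆ : LCR n l) = ⁅c, ⁅b, a⁆⁆
  calc (⁅a, ⁅b, c⁆⁆ : LCR n l)
      = ⁅⁅a, b⁆, c⁆ + ⁅b, ⁅a, c⁆⁆ := leibniz_lie a b c
    _ = ⁅⁅a, b⁆, c⁆ := by rw [hac, lie_zero, add_zero]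
    _ = -⁅c, ⁅a, b⁆⁆ := (lie_skew _ _).symm
    _ = -(⁅⁅c, a⁆, b⁆ + ⁅a, ⁅c, b⁆⁆) := by rw [← leibniz_lie]
    _ = -⁅a, ⁅c, b⁆⁆ := by rw [hca, zero_lie, zero_add]
    _ = ⁅⁅c, b⁆, a⁆ := lie_skew _ _
    _ = ⁅⁅c, b⁆, a⁆ + ⁅b, ⁅c, a⁆⁆ := by rw [hca, lie_zero, add_zero]
    _ = ⁅c, ⁅b, a⁆⁆ := (leibniz_lie c b a).symm

abbrev OP := {q : Fin n × Fin n // q.1 ≤ q.2}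
abbrev ι3 := (OP n × Fin n) ⊕ (OP n × Fin n)

def w : ι3 n → LCR n l := fun s =>
  match s with
  | Sum.inl (q, j) => ⁅gen n l (emb1 n q.1.1), v n l (q.1.2, j)⁆
  | Sum.inr (q, i) => ⁅gen n l (emb2 n q.1.2), v n l (i, q.1.1)⁆

lemma grade3_eq : LCRgrade n l 3 = Submodule.span ℂ (Set.range (w n l)) := by
  rw [grade3_eq']
  apply le_antisymm
  · rw [Submodule.span_le]
    rintro z ⟨x, ⟨a, rfl⟩, y, ⟨⟨i, j⟩, rfl⟩, rfl⟩
    by_cases ha : (a : ℕ) < n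
    · have hae : a = emb1 n ⟨(a : ℕ), ha⟩ := Fin.ext rfl
      rw [hae]
      rcases le_total (⟨(a : ℕ), ha⟩ : Fin n) i with h | h
      · exact Submodule.subset_span ⟨Sum.inl (⟨(⟨(a : ℕ), ha⟩, i), h⟩, j), rfl⟩
      · rw [swap1]
        exact Submodule.subset_span ⟨Sum.inl (⟨(i, ⟨(a : ℕ), ha⟩), h⟩, j), rfl⟩
    · have hae : a = emb2 n ⟨(a : ℕ) - n, by have := a.isLt; omega⟩ := by
        apply Fin.ext; show (a : ℕ) = n + ((a : ℕ) - n); have := a.isLt; omega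
      rw [hae]
      rcases le_total j (⟨(a : ℕ) - n, by have := a.isLt; omega⟩ : Fin n) with h | h
      · exact Submodule.subset_span
          ⟨Sum.inr (⟨(j, ⟨(a : ℕ) - n, by have := a.isLt; omega⟩), h⟩, i), rfl⟩
      · rw [swap2]
        exact Submodule.subset_span
          ⟨Sum.inr (⟨(⟨(a : ℕ) - n, by have := a.isLt; omega⟩, j), h⟩, i), rfl⟩
  · rw [Submodule.span_le]
    rintro z ⟨s, rfl⟩
    rcases s with ⟨q, j⟩ | ⟨q, i⟩
    · exact Submodule.subset_span
        ⟨gen n l (emb1 n q.1.1), ⟨_, rfl⟩, v n l (q.1.2, j), ⟨_, rfl⟩, rfl⟩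
    · exact Submodule.subset_span
        ⟨gen n l (emb2 n q.1.2), ⟨_, rfl⟩, v n l (i, q.1.1), ⟨_, rfl⟩, rfl⟩

variable {l} in
lemma phibar_w1 (hl : 3 ≤ l) (k i j : Fin n) :
    phibar n l hl ⁅gen n l (emb1 n k), v n l (i, j)⁆ =
      ((0 : G1 n), (0 : G2 n),
        ((fun a b c => E n ↑k a * (E n ↑i b * E n ↑j c) + E n ↑k b * (E n ↑i a * E n ↑j c)),
          (0 : Fin n → Fin n → Fin n → ℂ))) := by
  rw [show (⁅gen n l (emb1 n k), v n l (i, j)⁆ : LCR n l)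
      = crMk n l ⁅FreeLieAlgebra.of ℂ (emb1 n k),
          ⁅FreeLieAlgebra.of ℂ (emb1 n i), FreeLieAlgebra.of ℂ (emb2 n j)⁆⁆ from rfl]
  rw [phibar_mk, LieHom.map_lie, LieHom.map_lie, phi_of, phi_of, phi_of,
    genG_emb1, genG_emb1, genG_emb2]
  rw [gbr_def, gbr_def]
  refine G_ext ?_ ?_ ?_ ?_ ?_ <;> intros <;> simp [bt, gm] <;> ring

variable {l} in
lemma phibar_w2 (hl : 3 ≤ l) (k i j : Fin n) :
    phibar n l hl ⁅gen n l (emb2 n k), v n l (i, j)⁆ =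
      ((0 : G1 n), (0 : G2 n),
        ((0 : Fin n → Fin n → Fin n → ℂ),
          (fun a b c => E n ↑k a * (E n ↑i b * E n ↑j c) + E n ↑k c * (E n ↑i b * E n ↑j a)))) := by
  rw [show (⁅gen n l (emb2 n k), v n l (i, j)⁆ : LCR n l)
      = crMk n l ⁅FreeLieAlgebra.of ℂ (emb2 n k),
          ⁅FreeLieAlgebra.of ℂ (emb1 n i), FreeLieAlgebra.of ℂ (emb2 n j)⁆⁆ from rfl]
  rw [phibar_mk, LieHom.map_lie, LieHom.map_lie, phi_of, phi_of, phi_of,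
    genG_emb2, genG_emb1, genG_emb2]
  rw [gbr_def, gbr_def]
  refine G_ext ?_ ?_ ?_ ?_ ?_ <;> intros <;> simp [bt, gm] <;> ring

def fw : ι3 n → (G n →ₗ[ℂ] ℂ) := fun s =>
  match s with
  | Sum.inl (q, j) => ev31 n q.1.1 q.1.2 j
  | Sum.inr (q, i) => ev32 n q.1.2 i q.1.1

variable {l} in
lemma li_w (hl : 3 ≤ l) : LinearIndependent ℂ (w n l) := by
  apply LinearIndependent.of_comp (phibar n l hl)
  apply li_of_dual _ (fw n)
  · rintro (⟨⟨⟨k, i⟩, hki⟩, j⟩ | ⟨⟨⟨j, k⟩, hjk⟩, i⟩)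
    · simp only [Function.comp_apply, w, fw, phibar_w1]
      show E n ↑k k * (E n ↑i i * E n ↑j j) + E n ↑k i * (E n ↑i k * E n ↑j j) ≠ 0
      simp only [E, if_pos rfl]
      split_ifs <;> norm_num
    · simp only [Function.comp_apply, w, fw, phibar_w2]
      show E n ↑k k * (E n ↑i i * E n ↑j j) + E n ↑k j * (E n ↑i i * E n ↑j k) ≠ 0
      simp only [E, if_pos rfl]
      split_ifs <;> norm_num
  · rintro (⟨⟨⟨k, i⟩, hki⟩, j⟩ | ⟨⟨⟨j, k⟩, hjk⟩, i⟩)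
      <;> rintro (⟨⟨⟨k', i'⟩, hki'⟩, j'⟩ | ⟨⟨⟨j', k'⟩, hjk'⟩, i'⟩) <;> intro hq
    · -- inl, inl
      simp only [Function.comp_apply, w, fw, phibar_w1]
      show E n ↑k' k * (E n ↑i' i * E n ↑j' j) + E n ↑k' i * (E n ↑i' k * E n ↑j' j) = 0
      have h1 : (k : ℕ) ≤ (i : ℕ) := hki
      have h2 : (k' : ℕ) ≤ (i' : ℕ) := hki'
      simp only [E]
      split_ifs <;> try norm_num
      all_goals
        (exfalso; apply hq
         simp only [Sum.inl.injEq, Prod.mk.injEq, Subtype.mk.injEq]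
         refine ⟨⟨Fin.ext ?_, Fin.ext ?_⟩, Fin.ext ?_⟩ <;> omega)
    · -- inr vs inl index
      simp only [Function.comp_apply, w, fw, phibar_w2]
      rfl
    · simp only [Function.comp_apply, w, fw, phibar_w1]
      rfl
    · simp only [Function.comp_apply, w, fw, phibar_w2]
      show E n ↑k' k * (E n ↑i' i * E n ↑j' j) + E n ↑k' j * (E n ↑i' i * E n ↑j' k) = 0
      have h1 : (j : ℕ) ≤ (k : ℕ) := hjk
      have h2 : (j' : ℕ) ≤ (k' : ℕ) := hjk'
      simp only [E]
      split_ifs <;> try norm_num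
      all_goals
        (exfalso; apply hq
         simp only [Sum.inr.injEq, Prod.mk.injEq, Subtype.mk.injEq]
         refine ⟨⟨Fin.ext ?_, Fin.ext ?_⟩, Fin.ext ?_⟩ <;> omega)

variable {l} in
lemma finrank_grade3 (hl : 3 ≤ l) : Module.finrank ℂ ↥(LCRgrade n l 3) = n ^ 3 + n ^ 2 := by
  rw [grade3_eq, finrank_span_eq_card (li_w n hl)]
  have hOP : Fintype.card (OP n) = (n + 1).choose 2 := by
    rw [← Fintype.card_congr (Sym2.sortEquiv (α := Fin n))]
    rw [Sym2.card, Fintype.card_fin]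
  have hcard : Fintype.card (ι3 n) = (n + 1).choose 2 * n + (n + 1).choose 2 * n := by
    simp [Fintype.card_sum, Fintype.card_prod, hOP]
  rw [hcard]
  have hdvd : (2 : ℕ) ∣ (n + 1) * n := by
    have := (Nat.even_mul_succ_self n).two_dvd
    rwa [mul_comm] at this
  have h2 : 2 * ((n + 1).choose 2) = (n + 1) * n := by
    rw [Nat.choose_two_right]
    simp only [Nat.add_sub_cancel]
    exact Nat.mul_div_cancel' hdvd
  calc (n + 1).choose 2 * n + (n + 1).choose 2 * n = (2 * ((n + 1).choose 2)) * n := by ring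
    _ = ((n + 1) * n) * n := by rw [h2]
    _ = n ^ 3 + n ^ 2 := by ring

end CRAux

/-- For `n ≥ 1` and `l ≥ 3`, the degree-`2` graded component of
`L_{CR,l}(A)` has complex dimension `n²`, and the degree-`3` graded component has
complex dimension `n³ + n²`. -/
theorem dim_LCR_degree_two_three (n l : ℕ) (hn : 1 ≤ n) (hl : 3 ≤ l) :
    Module.finrank ℂ ↥(LCRgrade n l 2) = n ^ 2 ∧
    Module.finrank ℂ ↥(LCRgrade n l 3) = n ^ 3 + n ^ 2 := by
  exact ⟨CRAux.finrank_grade2 n hl, CRAux.finrank_grade3 n hl⟩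

end
end
end

section
/- For every nondegenerate pseudo-complex fundamental graded Lie algebra (m = g_{−l} ⊕ ⋯ ⊕ g_{−1}, I), the complex subspace n := ((g_{−l} ⊕ ⋯ ⊕ g_{−2}) ⊗_ℝ ℂ) ⊕ g^{10} is a Lie ideal of the complexification m ⊗_ℝ ℂ, and m ⊗_ℝ ℂ = n ⊕ g^{01} as a direct sum of complex vector spaces. -/
noncomputable section

open scoped TensorProduct

universe u

/-- Formal carrier for elements of the Tanaka prolongation spaces: `low v` represents an
element `v` of the negatively graded part (inside `m`), while `high F` represents a family
`(f_j)_{1 ≤ j ≤ l}` of maps `f_j : g_{-j} → g_{i-j}` (the component `f_j` is `F ⟨j-1, _⟩`). -/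
inductive FP (m : Type u) (l : ℕ) : Type u
  | low : m → FP m l
  | high : (Fin l → m → FP m l) → FP m l

namespace FP

variable {m : Type u} {l : ℕ} [LieRing m] [LieAlgebra ℝ m]

/-- Pointwise addition of formal prolongation elements (of the same degree). -/
def add : FP m l → FP m l → FP m l
  | low x, low y => low (x + y)
  | high F, high G => high fun j X => add (F j X) (G j X)
  | x, _ => x

/-- Pointwise negation. -/
def neg : FP m l → FP m l
  | low x => low (-x)
  | high F => high fun j X => neg (F j X)

/-- Pointwise scalar multiplication. -/
def smulR (c : ℝ) : FP m l → FP m l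
  | low x => low (c • x)
  | high F => high fun j X => smulR c (F j X)

/-- The mixed bracket `[h, W]` of a prolongation element `h` with `W ∈ g_{-(j+1)}`:
for `h` of negative degree it is the Lie bracket in `m`; for `h` of degree `k ≥ 0`
it is the evaluation `h(W)` of the component of `h` on `g_{-(j+1)}`. -/
def br (j : Fin l) : FP m l → m → FP m l
  | low x, W => low ⁅x, W⁆
  | high F, W => F j W

variable (g : ℤ → Submodule ℝ m)

/-- The two formal elements represent the same prolongation element (equality of the
underlying families of linear maps, i.e. equality of all values on the relevant domains). -/
def Eqv : FP m l → FP m l → Prop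
  | low x, low y => x = y
  | high F, high G => ∀ j : Fin l, ∀ X ∈ g (-(j + 1) : ℤ), Eqv (F j X) (G j X)
  | _, _ => False

/-- The formal element represents the zero element (the zero vector, resp. the family of
zero linear maps). -/
def IsZero : FP m l → Prop
  | low x => x = 0
  | high F => ∀ j : Fin l, ∀ X ∈ g (-(j + 1) : ℤ), IsZero (F j X)

/-- `Mem g I d x` : the formal element `x` is a member of the degree-`d` space of the
Tanaka prolongation of `(m = g_{-l} ⊕ ⋯ ⊕ g_{-1}, I)`.  For `d < 0` this is the space
`g_d`; for `d ≥ 0` it is the prolongation space defined inductively: a family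
`(f_j : g_{-j} → g_{d-j})_{1 ≤ j ≤ l}` of `ℝ`-linear maps (with values in `g_{d-j}`,
resp. in the previously defined prolongation space when `d - j ≥ 0`) satisfying the
Leibniz rule `f [X, Y] = [f X, Y] + [X, f Y]` for all homogeneous `X, Y ∈ m` (where the
bracket of a nonnegative degree element `h` with `W ∈ g_{-j}` is the evaluation `h(W)`,
and `[W, h] = -[h, W]`), and, in degree `0`, commuting with the complex structure `I`
on `g_{-1}` (a degree-`0` element is precisely a grading-preserving derivation of `m`,
recorded through its components `g_{-j} → g_{-j}`). -/
def Mem (I : ↥(g (-1)) →ₗ[ℝ] ↥(g (-1))) : ℤ → FP m l → Prop := fun d x =>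
  if 0 ≤ d then
    ∃ F : Fin l → m → FP m l, x = high F ∧
      (∀ j : Fin l,
        (∀ X ∈ g (-(j + 1) : ℤ), Mem I (d - (j + 1)) (F j X)) ∧
        (∀ X ∈ g (-(j + 1) : ℤ), ∀ Y ∈ g (-(j + 1) : ℤ),
          Eqv g (F j (X + Y)) (add (F j X) (F j Y))) ∧
        (∀ c : ℝ, ∀ X ∈ g (-(j + 1) : ℤ), Eqv g (F j (c • X)) (smulR c (F j X)))) ∧
      (∀ j j' : Fin l, ∀ X ∈ g (-(j + 1) : ℤ), ∀ Y ∈ g (-(j' + 1) : ℤ),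
        (∀ h : (j : ℕ) + (j' : ℕ) + 1 < l,
          Eqv g (F ⟨(j : ℕ) + (j' : ℕ) + 1, h⟩ ⁅X, Y⁆)
            (add (br j' (F j X) Y) (neg (br j (F j' Y) X)))) ∧
        (l ≤ (j : ℕ) + (j' : ℕ) + 1 →
          IsZero g (add (br j' (F j X) Y) (neg (br j (F j' Y) X))))) ∧
      (d = 0 → ∀ j : Fin l, (j : ℕ) = 0 → ∀ X v : ↥(g (-1)),
        Eqv g (F j (X : m)) (low (v : m)) →
          Eqv g (F j ((I X : ↥(g (-1))) : m)) (low ((I v : ↥(g (-1))) : m)))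
  else ∃ v : m, x = low v ∧ v ∈ g d
termination_by d _ => (d + 1).toNat
decreasing_by omega

end FP

/-- A nondegenerate pseudo-complex fundamental graded Lie algebra of type `l`:
a finite-dimensional real Lie algebra `m` with an internal grading
`m = g_{-l} ⊕ ⋯ ⊕ g_{-1}` (all other components being trivial), whose bracket respects
the grading, which is generated as a Lie algebra by `g_{-1}`, with `g_{-l} ≠ 0`,
together with a complex structure `I` on `g_{-1}` satisfying `[IX, IY] = [X, Y]`,
and which is Levi-nondegenerate. -/
structure IsPCF {m : Type u} [LieRing m] [LieAlgebra ℝ m] (l : ℕ)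
    (g : ℤ → Submodule ℝ m) (I : ↥(g (-1)) →ₗ[ℝ] ↥(g (-1))) : Prop where
  findim : FiniteDimensional ℝ m
  isInternal : DirectSum.IsInternal fun i : ℤ => g i
  supp : ∀ i : ℤ, ¬(-(l : ℤ) ≤ i ∧ i ≤ -1) → g i = ⊥
  grading : ∀ i j : ℤ, ∀ x ∈ g i, ∀ y ∈ g j, ⁅x, y⁆ ∈ g (i + j)
  nontriv : g (-(l : ℤ)) ≠ ⊥
  generated : LieSubalgebra.lieSpan ℝ m (g (-1) : Set m) = ⊤
  I_sq : ∀ X : ↥(g (-1)), I (I X) = -X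
  I_br : ∀ X Y : ↥(g (-1)),
    ⁅((I X : ↥(g (-1))) : m), ((I Y : ↥(g (-1))) : m)⁆ = ⁅(X : m), (Y : m)⁆
  nondeg : ∀ X : ↥(g (-1)), (∀ Y : ↥(g (-1)), ⁅(X : m), (Y : m)⁆ = 0) → X = 0

/-- The subset `g^{10} = {X ⊗ 1 - (I X) ⊗ i : X ∈ g_{-1}}` of the complexification. -/
def g10 {m : Type} [LieRing m] [LieAlgebra ℝ m] (g : ℤ → Submodule ℝ m)
    (I : ↥(g (-1)) →ₗ[ℝ] ↥(g (-1))) : Set (ℂ ⊗[ℝ] m) :=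
  {y | ∃ X : ↥(g (-1)),
    y = (1 : ℂ) ⊗ₜ[ℝ] (X : m) - Complex.I ⊗ₜ[ℝ] ((I X : ↥(g (-1))) : m)}

/-- The subset `g^{01} = {X ⊗ 1 + (I X) ⊗ i : X ∈ g_{-1}}` of the complexification. -/
def g01 {m : Type} [LieRing m] [LieAlgebra ℝ m] (g : ℤ → Submodule ℝ m)
    (I : ↥(g (-1)) →ₗ[ℝ] ↥(g (-1))) : Set (ℂ ⊗[ℝ] m) :=
  {y | ∃ X : ↥(g (-1)),
    y = (1 : ℂ) ⊗ₜ[ℝ] (X : m) + Complex.I ⊗ₜ[ℝ] ((I X : ↥(g (-1))) : m)}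

/-- The complex subspace `n := ((g_{-l} ⊕ ⋯ ⊕ g_{-2}) ⊗_ℝ ℂ) ⊕ g^{10}` of the
complexification `m ⊗_ℝ ℂ`. -/
def nSub {m : Type} [LieRing m] [LieAlgebra ℝ m] (g : ℤ → Submodule ℝ m)
    (I : ↥(g (-1)) →ₗ[ℝ] ↥(g (-1))) : Submodule ℂ (ℂ ⊗[ℝ] m) :=
  Submodule.baseChange ℂ (⨆ i : ℤ, ⨆ _ : i ≤ -2, g i) ⊔ Submodule.span ℂ (g10 g I)

/-!
Since `m` lives in negative degrees, every bracket in `m` has degree `≤ -2`; hence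
`[m ⊗ ℂ, m ⊗ ℂ] ⊆ g_{≤-2} ⊗ ℂ ⊆ n`, and a subspace containing the derived algebra is an ideal.
For the splitting, `m = g_{≤-2} ⊕ g_{-1}`, and `1 ⊗ X = ½ ((1 ⊗ X - i ⊗ I X) + (1 ⊗ X + i ⊗ I X))`
gives `n + span g^{01} = m ⊗ ℂ`. With `P` the projection onto `g_{-1}` along `g_{≤-2}`, the map
`Φ = (I_ℂ - i) ∘ P_ℂ` kills `n` and acts on `g^{01}` as multiplication by `-2i`,
so `n ∩ span g^{01} = 0`.
-/

open TensorProduct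

theorem lie_mem_iSup_le_neg_two {R L : Type*} [CommRing R] [LieRing L] [LieAlgebra R L]
    {g : ℤ → Submodule R L}
    (hgrad : ∀ i j : ℤ, ∀ x ∈ g i, ∀ y ∈ g j, ⁅x, y⁆ ∈ g (i + j))
    (hneg : ∀ i : ℤ, 0 ≤ i → g i = ⊥) (htop : ⨆ i, g i = ⊤) (u v : L) :
    ⁅u, v⁆ ∈ ⨆ i : ℤ, ⨆ _ : i ≤ -2, g i := by
  have hmem : ⁅u, v⁆ ∈ Submodule.map₂ (LieModule.toEnd R L L : L →ₗ[R] L →ₗ[R] L) ⊤ ⊤ :=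
    Submodule.apply_mem_map₂ _ Submodule.mem_top Submodule.mem_top
  suffices h : Submodule.map₂ (LieModule.toEnd R L L : L →ₗ[R] L →ₗ[R] L) ⊤ ⊤ ≤
      ⨆ i : ℤ, ⨆ _ : i ≤ -2, g i from h hmem
  rw [← htop, Submodule.map₂_iSup_left, iSup_le_iff]
  intro i
  rw [Submodule.map₂_iSup_right, iSup_le_iff]
  intro j
  refine Submodule.map₂_le.mpr fun x hx y hy => ?_
  rcases lt_or_ge i 0 with hi | hi
  · rcases lt_or_ge j 0 with hj | hj
    · exact le_iSup₂ (f := fun k (_ : k ≤ -2) => g k) (i + j) (by omega) (hgrad i j x hx y hy)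
    · rw [hneg j hj, Submodule.mem_bot] at hy
      simp [hy]
  · rw [hneg i hi, Submodule.mem_bot] at hx
    simp [hx]

theorem isCompl_iSup_le_neg_two {R M : Type*} [Ring R] [AddCommGroup M] [Module R M]
    {g : ℤ → Submodule R M} (hint : DirectSum.IsInternal g) (hneg : ∀ i : ℤ, 0 ≤ i → g i = ⊥) :
    IsCompl (⨆ i : ℤ, ⨆ _ : i ≤ -2, g i) (g (-1)) := by
  refine ⟨(hint.submodule_iSupIndep.disjoint_biSup (y := {i | i ≤ -2}) ?_).symm, ?_⟩
  · simp
  rw [codisjoint_iff, eq_top_iff, ← hint.submodule_iSup_eq_top, iSup_le_iff]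
  intro i
  rcases le_or_gt i (-2) with hi | hi
  · exact le_sup_of_le_left (le_iSup₂ (f := fun k (_ : k ≤ -2) => g k) i hi)
  · rcases eq_or_ne i (-1) with rfl | hi'
    · exact le_sup_right
    · simp [hneg i (by omega)]

theorem lie_mem_baseChange_of_forall_lie_mem {R A L : Type*} [CommRing R] [CommRing A]
    [Algebra R A] [LieRing L] [LieAlgebra R L] {W : Submodule R L} (hW : ∀ u v : L, ⁅u, v⁆ ∈ W)
    (x y : A ⊗[R] L) : ⁅x, y⁆ ∈ W.baseChange A := by
  induction x using TensorProduct.induction_on with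
  | zero => simp
  | add x₁ x₂ h₁ h₂ => rw [add_lie]; exact add_mem h₁ h₂
  | tmul a u =>
    induction y using TensorProduct.induction_on with
    | zero => simp
    | add y₁ y₂ h₁ h₂ => rw [lie_add]; exact add_mem h₁ h₂
    | tmul b v =>
      rw [LieAlgebra.ExtendScalars.bracket_tmul]
      exact Submodule.tmul_mem_baseChange_of_mem _ (hW u v)

theorem Submodule.disjoint_of_le_ker_of_le_ker_sub_smul {K N : Type*} [Field K] [AddCommGroup N]
    [Module K N] {p q : Submodule K N} {f : N →ₗ[K] N} {c : K} (hc : c ≠ 0)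
    (hp : p ≤ LinearMap.ker f) (hq : q ≤ LinearMap.ker (f - c • LinearMap.id)) :
    Disjoint p q := by
  refine Submodule.disjoint_def.mpr fun w hwp hwq => ?_
  have hfw : f w = c • w := sub_eq_zero.mp (hq hwq)
  rw [hp hwp, eq_comm, smul_eq_zero] at hfw
  exact hfw.resolve_left hc

section Complexification

variable {E : Type*} [AddCommGroup E] [Module ℝ E] {U V : Submodule ℝ E}

theorem codisjoint_baseChange_sup_span_tmul (hUV : IsCompl U V) (J : V →ₗ[ℝ] V) :
    Codisjoint
      (U.baseChange ℂ ⊔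
        Submodule.span ℂ {y | ∃ X : V, y = (1 : ℂ) ⊗ₜ[ℝ] (X : E) - Complex.I ⊗ₜ[ℝ] (J X : E)})
      (Submodule.span ℂ {y | ∃ X : V, y = (1 : ℂ) ⊗ₜ[ℝ] (X : E) + Complex.I ⊗ₜ[ℝ] (J X : E)}) := by
  rw [codisjoint_iff, eq_top_iff, ← Submodule.baseChange_top, Submodule.baseChange_eq_span,
    Submodule.span_le]
  rintro _ ⟨e, -, rfl⟩
  obtain ⟨u, hu, v, hv, rfl⟩ :=
    Submodule.mem_sup.mp (hUV.sup_eq_top ▸ Submodule.mem_top : e ∈ U ⊔ V)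
  rw [mk_apply, tmul_add]
  refine add_mem (Submodule.mem_sup_left (Submodule.mem_sup_left
    (Submodule.tmul_mem_baseChange_of_mem 1 hu))) ?_
  have hsplit : (1 : ℂ) ⊗ₜ[ℝ] v = (2⁻¹ : ℂ) •
      (((1 : ℂ) ⊗ₜ[ℝ] v - Complex.I ⊗ₜ[ℝ] (J ⟨v, hv⟩ : E)) +
        ((1 : ℂ) ⊗ₜ[ℝ] v + Complex.I ⊗ₜ[ℝ] (J ⟨v, hv⟩ : E))) := by
    module
  rw [hsplit]
  exact Submodule.smul_mem _ _ (add_mem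
    (Submodule.mem_sup_left (Submodule.mem_sup_right (Submodule.subset_span ⟨⟨v, hv⟩, rfl⟩)))
    (Submodule.mem_sup_right (Submodule.subset_span ⟨⟨v, hv⟩, rfl⟩)))

theorem disjoint_baseChange_sup_span_tmul (hUV : IsCompl U V) {J : V →ₗ[ℝ] V}
    (hJ : ∀ X, J (J X) = -X) :
    Disjoint
      (U.baseChange ℂ ⊔
        Submodule.span ℂ {y | ∃ X : V, y = (1 : ℂ) ⊗ₜ[ℝ] (X : E) - Complex.I ⊗ₜ[ℝ] (J X : E)})
      (Submodule.span ℂ {y | ∃ X : V, y = (1 : ℂ) ⊗ₜ[ℝ] (X : E) + Complex.I ⊗ₜ[ℝ] (J X : E)}) := by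
  set P := V.projectionOnto U hUV.symm
  set Φ : ℂ ⊗[ℝ] E →ₗ[ℂ] ℂ ⊗[ℝ] E :=
    (V.subtype ∘ₗ J ∘ₗ P).baseChange ℂ - Complex.I • (V.subtype ∘ₗ P).baseChange ℂ
  have hΦV : ∀ (z : ℂ) (X : V),
      Φ (z ⊗ₜ[ℝ] (X : E)) = z ⊗ₜ[ℝ] (J X : E) - (Complex.I * z) ⊗ₜ[ℝ] (X : E) := fun z X => by
    simp [Φ, P, smul_tmul']
  refine Submodule.disjoint_of_le_ker_of_le_ker_sub_smul (c := -2 * Complex.I) (f := Φ)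
    (by simp) (sup_le ?_ ?_) ?_
  · rw [Submodule.baseChange_eq_span, Submodule.span_le]
    rintro _ ⟨u, hu, rfl⟩
    simp [Φ, P, Submodule.projectionOnto_apply_of_mem_right _ hu]
  · rw [Submodule.span_le]
    rintro _ ⟨X, rfl⟩
    simp only [SetLike.mem_coe, LinearMap.mem_ker, map_sub, hΦV, hJ, Submodule.coe_neg,
      tmul_neg]
    simp only [tmul_eq_smul_one_tmul Complex.I, tmul_eq_smul_one_tmul (Complex.I * _)]
    linear_combination (norm := module) Complex.I_mul_I • (1 : ℂ) ⊗ₜ[ℝ] (J X : E)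
  · rw [Submodule.span_le]
    rintro _ ⟨X, rfl⟩
    simp only [SetLike.mem_coe, LinearMap.mem_ker, LinearMap.sub_apply, map_add, hΦV, hJ,
      Submodule.coe_neg, tmul_neg, LinearMap.smul_apply, LinearMap.id_apply]
    simp only [tmul_eq_smul_one_tmul Complex.I, tmul_eq_smul_one_tmul (Complex.I * _)]
    linear_combination (norm := module) Complex.I_mul_I • (1 : ℂ) ⊗ₜ[ℝ] (J X : E)

theorem isCompl_baseChange_sup_span_tmul (hUV : IsCompl U V) {J : V →ₗ[ℝ] V}
    (hJ : ∀ X, J (J X) = -X) :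
    IsCompl
      (U.baseChange ℂ ⊔
        Submodule.span ℂ {y | ∃ X : V, y = (1 : ℂ) ⊗ₜ[ℝ] (X : E) - Complex.I ⊗ₜ[ℝ] (J X : E)})
      (Submodule.span ℂ {y | ∃ X : V, y = (1 : ℂ) ⊗ₜ[ℝ] (X : E) + Complex.I ⊗ₜ[ℝ] (J X : E)}) :=
  ⟨disjoint_baseChange_sup_span_tmul hUV hJ, codisjoint_baseChange_sup_span_tmul hUV J⟩

end Complexification

/-- For every nondegenerate pseudo-complex fundamental graded Lie
algebra `(m = g_{-l} ⊕ ⋯ ⊕ g_{-1}, I)`, the complex subspace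
`n := ((g_{-l} ⊕ ⋯ ⊕ g_{-2}) ⊗_ℝ ℂ) ⊕ g^{10}` is a Lie ideal of the complexification
`m ⊗_ℝ ℂ`, and `m ⊗_ℝ ℂ = n ⊕ g^{01}` as a direct sum of complex vector spaces. -/
theorem nSub_isIdeal_and_compl
    (l : ℕ) (m : Type) [LieRing m] [LieAlgebra ℝ m]
    (g : ℤ → Submodule ℝ m) (I : ↥(g (-1)) →ₗ[ℝ] ↥(g (-1)))
    (hpcf : IsPCF l g I) :
    (∀ x : ℂ ⊗[ℝ] m, ∀ y ∈ nSub g I, ⁅x, y⁆ ∈ nSub g I) ∧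
      IsCompl (nSub g I) (Submodule.span ℂ (g01 g I)) := by
  have hneg : ∀ i : ℤ, 0 ≤ i → g i = ⊥ := fun i hi => hpcf.supp i (by omega)
  have hderived : ∀ u v : m, ⁅u, v⁆ ∈ ⨆ i : ℤ, ⨆ _ : i ≤ -2, g i :=
    lie_mem_iSup_le_neg_two hpcf.grading hneg hpcf.isInternal.submodule_iSup_eq_top
  refine ⟨fun x y _ => Submodule.mem_sup_left (lie_mem_baseChange_of_forall_lie_mem hderived x y),
    ?_⟩
  exact isCompl_baseChange_sup_span_tmul (isCompl_iSup_le_neg_two hpcf.isInternal hneg) hpcf.I_sq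

end
end

section
/- Let h be a Lie algebra over ℂ and let Y, a, b ∈ h. Set Z := [Y, a], and for m ≥ 0 set a_m := (ad Z)^m(a) and b_m := (ad Z)^m(b). Assume (i) [Y, Z] = 0, (ii) [a_m, a_{m'}] = 0 for all m, m' ≥ 0, and (iii) [a_m, [a_{m'}, [Y, b_j]]] = 0 for all m, m', j ≥ 0. For a tuple (j_1, …, j_{p−1}; j_p) of nonnegative integers write W(j_1, …, j_{p−1}; j_p) := [a_{j_1}, [a_{j_2}, …, [a_{j_{p−1}}, b_{j_p}]⋯]]. Then for every p ≥ 2 and all nonnegative integers i_1, …, i_p and j there exists a finitely supported family c of nonnegative integers, indexed by tuples (j_1, …, j_{p−1}; j_p) with j_1 ≤ ⋯ ≤ j_{p−1}, such that [Y, [a_{i_1}, [a_{i_2}, …, [a_{i_p}, b_j]⋯]]] = Σ c(j_1, …, j_{p−1}; j_p) · W(j_1, …, j_{p−1}; j_p). Moreover, if for some position t with t + 2 ≤ p one has i_t = i_{t+1} = 0 and i_{t+2} > 0, then the family c can be chosen so that its value at the nondecreasing reordering of (i_1, …, i_{t−1}, 1, i_{t+2}, …, i_p; j) and its value at the nondecreasing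 reordering of (i_1, …, i_t, i_{t+2}, …, i_p; j+1) are both strictly positive. -/
noncomputable section

/-- `iterBr A Bj [j₁, …, j_q] = [A j₁, [A j₂, …, [A j_q, Bj]⋯]]`. -/
def iterBr {h : Type} [LieRing h] (A : ℕ → h) (Bj : h) (js : List ℕ) : h :=
  js.foldr (fun k acc => ⁅A k, acc⁆) Bj

/-!
Since `[Y, Z] = 0`, `ad Y` sends `a_0` to `Z` and kills every `a_m` with `m ≥ 1`, while `ad Z`
raises the index of `a_m` and of `b_j` by one. Expanding `[Y, W(i₁, …, i_p; j)]` by the Leibniz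
rule therefore gives, for every position `s` with `i_s = 0`, the element `W` with `a_{i_s}`
replaced by `Z` and then expanded again by the Leibniz rule for `ad Z`: a sum of `W`'s of length
`p - 1` with one index raised, each with coefficient one. The remaining term
`[a_{i₁}, …, [a_{i_p}, [Y, b_j]]⋯]` vanishes by (iii) because `p ≥ 2`, and since the `a_m`
commute, every `W` may be rewritten with its indices sorted. The two distinguished terms arise when
`ad Y` hits `a_{i_t}` and then `ad Z` hits `a_{i_{t+1}} = a_0`, resp. when `ad Y` hits
`a_{i_{t+1}}` and then `ad Z` hits `b_j`.
-/

theorem Multiset.toFinsupp_sum_nsmul {α M : Type*} [DecidableEq α] [AddCommMonoid M]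
    (s : Multiset α) (f : α → M) : s.toFinsupp.sum (fun a n => n • f a) = (s.map f).sum := by
  induction s using Multiset.induction_on with
  | empty => simp
  | cons a s ih =>
    rw [← Multiset.singleton_add, Multiset.toFinsupp_add,
      Finsupp.sum_add_index' (h := fun a n => n • f a) (fun _ => zero_nsmul _)
        (fun _ _ _ => add_nsmul _ _ _),
      ih, Multiset.toFinsupp_singleton]
    simp

theorem List.drop_eq_cons_of_getD_eq {l : List ℕ} {t d : ℕ} (ht : t < l.length)
    (h : l.getD t d = d) : l.drop t = d :: l.drop (t + 1) := by
  rw [List.drop_eq_getElem_cons ht, ← List.getD_eq_getElem l d ht, h]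

/-! A word `(js, j)` stands for `iterBr A (B j) js`; a list of words for the sum of these. -/

/-- The words of `⁅Z, iterBr A (B j) l⁆` when `ad Z` raises every index by one. -/
def adZTerms : List ℕ → ℕ → List (List ℕ × ℕ)
  | [], j => [([], j + 1)]
  | k :: l, j => ((k + 1) :: l, j) :: (adZTerms l j).map (Prod.map (k :: ·) id)

/-- The words of `⁅Y, iterBr A (B j) l⁆`, apart from `iterBr A ⁅Y, B j⁆ l`, when `ad Y` sends
`A 0` to `Z` and kills every other `A k`. -/
def adYTerms : List ℕ → ℕ → List (List ℕ × ℕ)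
  | [], _ => []
  | k :: l, j => (if k = 0 then adZTerms l j else []) ++ (adYTerms l j).map (Prod.map (k :: ·) id)

theorem length_of_mem_adZTerms {l : List ℕ} {j : ℕ} {w : List ℕ × ℕ}
    (hw : w ∈ adZTerms l j) : w.1.length = l.length := by
  induction l generalizing w with
  | nil => simp_all [adZTerms]
  | cons k l ih =>
    simp only [adZTerms, List.mem_cons, List.mem_map] at hw
    rcases hw with rfl | ⟨v, hv, rfl⟩
    · simp
    · simp [ih hv]

theorem length_of_mem_adYTerms {l : List ℕ} {j : ℕ} {w : List ℕ × ℕ}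
    (hw : w ∈ adYTerms l j) : w.1.length + 1 = l.length := by
  induction l generalizing w with
  | nil => simp [adYTerms] at hw
  | cons k l ih =>
    simp only [adYTerms, List.mem_append, List.mem_map] at hw
    rcases hw with hw | ⟨v, hv, rfl⟩
    · split_ifs at hw
      · simp [length_of_mem_adZTerms hw]
      · simp at hw
    · simp [← ih hv]

theorem cons_succ_mem_adZTerms (k : ℕ) (l : List ℕ) (j : ℕ) :
    ((k + 1) :: l, j) ∈ adZTerms (k :: l) j :=
  List.mem_cons_self

theorem mem_adZTerms_self (l : List ℕ) (j : ℕ) : (l, j + 1) ∈ adZTerms l j := by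
  induction l with
  | nil => simp [adZTerms]
  | cons k l ih => exact List.mem_cons_of_mem _ (List.mem_map_of_mem (f := Prod.map _ id) ih)

theorem append_mem_adYTerms (pre : List ℕ) {l : List ℕ} {j : ℕ} {w : List ℕ × ℕ}
    (hw : w ∈ adZTerms l j) : (pre ++ w.1, w.2) ∈ adYTerms (pre ++ 0 :: l) j := by
  induction pre with
  | nil => simp [adYTerms, hw]
  | cons k pre ih =>
    exact List.mem_append_right _ (List.mem_map_of_mem (f := Prod.map (k :: ·) id) ih)

theorem take_append_one_append_drop_mem_adYTerms {l : List ℕ} {t : ℕ} (ht : t + 1 < l.length)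
    (h0 : l.getD t 0 = 0) (h1 : l.getD (t + 1) 0 = 0) (j : ℕ) :
    (l.take t ++ [1] ++ l.drop (t + 2), j) ∈ adYTerms l j := by
  have hw := append_mem_adYTerms (l.take t) (cons_succ_mem_adZTerms 0 (l.drop (t + 2)) j)
  rw [← List.drop_eq_cons_of_getD_eq ht h1, ← List.drop_eq_cons_of_getD_eq (by omega) h0,
    List.take_append_drop] at hw
  simpa using hw

theorem take_append_drop_mem_adYTerms {l : List ℕ} {t : ℕ} (ht : t < l.length)
    (h0 : l.getD t 0 = 0) (j : ℕ) : (l.take t ++ l.drop (t + 1), j + 1) ∈ adYTerms l j := by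
  have hw := append_mem_adYTerms (l.take t) (mem_adZTerms_self (l.drop (t + 1)) j)
  rwa [← List.drop_eq_cons_of_getD_eq ht h0, List.take_append_drop] at hw

section LieRing

variable {L : Type} [LieRing L] (A B : ℕ → L)

@[simp] theorem iterBr_nil (x : L) : iterBr A x [] = x := rfl

@[simp] theorem iterBr_cons (x : L) (k : ℕ) (l : List ℕ) :
    iterBr A x (k :: l) = ⁅A k, iterBr A x l⁆ := rfl

theorem iterBr_eq_zero_of_lie_lie_eq_zero {x : L} (hx : ∀ k k', ⁅A k, ⁅A k', x⁆⁆ = 0)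
    {l : List ℕ} (hl : 2 ≤ l.length) : iterBr A x l = 0 := by
  match l, hl with
  | [k, k'], _ => exact hx k k'
  | k :: k' :: k'' :: l, _ =>
    rw [iterBr_cons, iterBr_eq_zero_of_lie_lie_eq_zero hx (l := k' :: k'' :: l) (by simp),
      lie_zero]

theorem iterBr_perm (hA : ∀ k k', ⁅A k, A k'⁆ = 0) (x : L) {l l' : List ℕ} (h : l.Perm l') :
    iterBr A x l = iterBr A x l' := by
  induction h with
  | nil => rfl
  | cons k _ ih => rw [iterBr_cons, iterBr_cons, ih]
  | swap k k' l =>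
    simp only [iterBr_cons]
    rw [leibniz_lie (A k'), hA, zero_lie, zero_add]
  | trans _ _ ih₁ ih₂ => exact ih₁.trans ih₂

def iterBrSum (ws : List (List ℕ × ℕ)) : L :=
  (ws.map fun w => iterBr A (B w.2) w.1).sum

@[simp] theorem iterBrSum_nil : iterBrSum A B [] = 0 := rfl

@[simp] theorem iterBrSum_cons (w : List ℕ × ℕ) (ws : List (List ℕ × ℕ)) :
    iterBrSum A B (w :: ws) = iterBr A (B w.2) w.1 + iterBrSum A B ws := rfl

@[simp] theorem iterBrSum_append (ws vs : List (List ℕ × ℕ)) :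
    iterBrSum A B (ws ++ vs) = iterBrSum A B ws + iterBrSum A B vs := by
  simp [iterBrSum]

theorem iterBrSum_map_cons (k : ℕ) (ws : List (List ℕ × ℕ)) :
    iterBrSum A B (ws.map (Prod.map (k :: ·) id)) = ⁅A k, iterBrSum A B ws⁆ := by
  induction ws with
  | nil => simp
  | cons w ws ih => simp [ih, lie_add]

variable {A B}

theorem lie_iterBr_eq_iterBrSum_adZTerms {Z : L} (hZA : ∀ k, ⁅Z, A k⁆ = A (k + 1))
    (hZB : ∀ j, ⁅Z, B j⁆ = B (j + 1)) (l : List ℕ) (j : ℕ) :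
    ⁅Z, iterBr A (B j) l⁆ = iterBrSum A B (adZTerms l j) := by
  induction l with
  | nil => simp [adZTerms, hZB]
  | cons k l ih =>
    rw [iterBr_cons, leibniz_lie, hZA, ih, adZTerms, iterBrSum_cons, iterBrSum_map_cons]
    rfl

theorem lie_iterBr_eq_iterBrSum_adYTerms {Y Z : L} (hZA : ∀ k, ⁅Z, A k⁆ = A (k + 1))
    (hZB : ∀ j, ⁅Z, B j⁆ = B (j + 1)) (hY0 : ⁅Y, A 0⁆ = Z) (hY : ∀ k, ⁅Y, A (k + 1)⁆ = 0)
    (l : List ℕ) (j : ℕ) :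
    ⁅Y, iterBr A (B j) l⁆ = iterBrSum A B (adYTerms l j) + iterBr A ⁅Y, B j⁆ l := by
  induction l with
  | nil => simp [adYTerms]
  | cons k l ih =>
    rw [iterBr_cons, leibniz_lie, ih, lie_add, adYTerms, iterBrSum_append, iterBrSum_map_cons,
      iterBr_cons]
    cases k with
    | zero => simp [hY0, lie_iterBr_eq_iterBrSum_adZTerms hZA hZB, add_assoc]
    | succ k => simp [hY]

theorem lie_succ_eq_zero {Y Z : L} (hYZ : ⁅Y, Z⁆ = 0)
    (hZA : ∀ k, ⁅Z, A k⁆ = A (k + 1)) (hY0 : ⁅Y, A 0⁆ = Z) (k : ℕ) : ⁅Y, A (k + 1)⁆ = 0 := by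
  have step : ∀ k, ⁅Y, A (k + 1)⁆ = ⁅Z, ⁅Y, A k⁆⁆ := fun k => by
    rw [← hZA, leibniz_lie, hYZ, zero_lie, zero_add]
  induction k with
  | zero => rw [step, hY0, lie_self]
  | succ k ih => rw [step, ih, lie_zero]

end LieRing

theorem LieAlgebra.lie_ad_pow_apply {R L : Type*} [CommRing R] [LieRing L] [LieAlgebra R L]
    (Z x : L) (k : ℕ) : ⁅Z, (ad R L Z ^ k) x⁆ = (ad R L Z ^ (k + 1)) x := by
  rw [pow_succ', Module.End.mul_apply, ad_apply]

/-- Let `h` be a complex Lie algebra, `Y, a, b ∈ h`, `Z := [Y, a]`,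
`a_m := (ad Z)^m a`, `b_m := (ad Z)^m b`.  Assume `[Y, Z] = 0`, all `a_m` commute, and
`[a_m, [a_{m'}, [Y, b_j]]] = 0`.  Then every bracket `[Y, [a_{i₁}, …, [a_{i_p}, b_j]⋯]]`
(`p ≥ 2`) is a finite `ℕ`-linear combination of the elements
`W(j₁, …, j_{p-1}; j_p) = [a_{j₁}, …, [a_{j_{p-1}}, b_{j_p}]⋯]` with `j₁ ≤ ⋯ ≤ j_{p-1}`;
moreover, if `i_t = i_{t+1} = 0` and `i_{t+2} > 0` (for a position `t` with `t + 2 ≤ p`,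
written here with `0`-based indices, so `t + 2 < p`), the combination can be chosen with
strictly positive coefficients at the nondecreasing reorderings of
`(i₁, …, i_{t-1}, 1, i_{t+2}, …, i_p; j)` and of `(i₁, …, i_t, i_{t+2}, …, i_p; j+1)`. -/
theorem bracket_with_Y_as_nonneg_combination
    (h : Type) [LieRing h] [LieAlgebra ℂ h] (Y a b Z : h) (hZ : Z = ⁅Y, a⁆)
    (A B : ℕ → h)
    (hA : ∀ k : ℕ, A k = ((LieAlgebra.ad ℂ h Z) ^ k) a)
    (hB : ∀ k : ℕ, B k = ((LieAlgebra.ad ℂ h Z) ^ k) b)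
    (h1 : ⁅Y, Z⁆ = 0)
    (h2 : ∀ k k' : ℕ, ⁅A k, A k'⁆ = 0)
    (h3 : ∀ k k' j : ℕ, ⁅A k, ⁅A k', ⁅Y, B j⁆⁆⁆ = 0) :
    ∀ p : ℕ, 2 ≤ p → ∀ il : List ℕ, il.length = p → ∀ j : ℕ,
      (∃ c : (List ℕ × ℕ) →₀ ℕ,
        (∀ t ∈ c.support, t.1.length = p - 1 ∧ t.1.Pairwise (· ≤ ·)) ∧
        ⁅Y, iterBr A (B j) il⁆ = c.sum fun t k => k • iterBr A (B t.2) t.1) ∧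
      (∀ t : ℕ, t + 2 < p →
        il.getD t 0 = 0 → il.getD (t + 1) 0 = 0 → 0 < il.getD (t + 2) 0 →
        ∃ c : (List ℕ × ℕ) →₀ ℕ,
          (∀ s ∈ c.support, s.1.length = p - 1 ∧ s.1.Pairwise (· ≤ ·)) ∧
          ⁅Y, iterBr A (B j) il⁆ = (c.sum fun s k => k • iterBr A (B s.2) s.1) ∧
          0 < c ((il.take t ++ [1] ++ il.drop (t + 2)).insertionSort (· ≤ ·), j) ∧
          0 < c ((il.take (t + 1) ++ il.drop (t + 2)).insertionSort (· ≤ ·), j + 1)) := by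
  classical
  have hZA : ∀ k, ⁅Z, A k⁆ = A (k + 1) := fun k => by rw [hA, hA, LieAlgebra.lie_ad_pow_apply]
  have hZB : ∀ k, ⁅Z, B k⁆ = B (k + 1) := fun k => by rw [hB, hB, LieAlgebra.lie_ad_pow_apply]
  have hY0 : ⁅Y, A 0⁆ = Z := by rw [hA, pow_zero, Module.End.one_apply, hZ]
  intro p hp il hlen j
  let sortKey : List ℕ × ℕ → List ℕ × ℕ := Prod.map (List.insertionSort (· ≤ ·)) id
  let c := Multiset.toFinsupp (↑((adYTerms il j).map sortKey) : Multiset (List ℕ × ℕ))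
  have hc_supp : ∀ s ∈ c.support, s.1.length = p - 1 ∧ s.1.Pairwise (· ≤ ·) := by
    intro s hs
    rw [Multiset.toFinsupp_support, Multiset.mem_toFinset, Multiset.mem_coe] at hs
    obtain ⟨w, hw, rfl⟩ := List.mem_map.mp hs
    have := length_of_mem_adYTerms hw
    exact ⟨(List.length_insertionSort _ _).trans (by omega), List.pairwise_insertionSort _ _⟩
  have hc_eq : ⁅Y, iterBr A (B j) il⁆ = c.sum fun s k => k • iterBr A (B s.2) s.1 := by
    rw [lie_iterBr_eq_iterBrSum_adYTerms hZA hZB hY0 (lie_succ_eq_zero h1 hZA hY0),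
      iterBr_eq_zero_of_lie_lie_eq_zero A (h3 · · j) (hlen ▸ hp), add_zero,
      Multiset.toFinsupp_sum_nsmul, Multiset.map_coe, Multiset.sum_coe, List.map_map, iterBrSum]
    exact congrArg List.sum <| List.map_congr_left fun w _ =>
      (iterBr_perm A h2 _ (List.perm_insertionSort _ w.1)).symm
  have hc_pos : ∀ w ∈ adYTerms il j, 0 < c (sortKey w) := fun w hw => by
    simpa [c, Multiset.toFinsupp_apply] using List.mem_map_of_mem hw
  refine ⟨⟨c, hc_supp, hc_eq⟩, fun t ht hi0 hi1 _ => ⟨c, hc_supp, hc_eq, ?_, ?_⟩⟩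
  · exact hc_pos _ (take_append_one_append_drop_mem_adYTerms (by omega) hi0 hi1 j)
  · exact hc_pos _ (take_append_drop_mem_adYTerms (t := t + 1) (by omega) hi1 j)
end
end

section
/- For every integer l ≥ 2 there exists a nondegenerate pseudo-complex fundamental graded Lie algebra (m = g_{−l} ⊕ ⋯ ⊕ g_{−1}, I) of type l whose Tanaka prolongation (g_i)_{i ≥ 0} satisfies g_l ≠ 0; in particular, there exist weighted homogeneous polynomial models of every length l ≥ 2 admitting infinitesimal CR automorphisms of positive weighted degree. -/
noncomputable section

universe u

/-- A bundled nondegenerate pseudo-complex fundamental graded Lie algebra of type `l`. -/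
structure PCFBundle (l : ℕ) where
  carrier : Type
  [lieRing : LieRing carrier]
  [lieAlg : LieAlgebra ℝ carrier]
  g : ℤ → Submodule ℝ carrier
  I : ↥(g (-1)) →ₗ[ℝ] ↥(g (-1))
  pcf : IsPCF l g I

attribute [instance] PCFBundle.lieRing PCFBundle.lieAlg

/-- The degree-`l` space of the Tanaka prolongation of `P` is nonzero. -/
def PCFBundle.prolongDegLNonzero {l : ℕ} (P : PCFBundle l) : Prop :=
  ∃ x : FP P.carrier l, FP.Mem P.g P.I (l : ℤ) x ∧ ¬ FP.IsZero P.g x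

/-!
The example is `m = n₋(gl(l+1, ℂ))`, the strictly lower triangular complex matrices viewed as a
real Lie algebra and graded by diagonals (the entry `(a, b)` has degree `b - a`), with
`I = ad J` for `J = diag((-1)^a i/2)`. Since `m` is the negative part of the graded Lie algebra
`gl(l+1, ℂ)`, every `y` of degree `d ≥ 0` there acts on `m` through `ad y` as an element of
the degree-`d` prolongation space; the compatibility with `I` in degree `0` holds because `J`
is central in the diagonal matrices. The matrix unit `E₀ₗ` has degree `l` and is nonzero in
the prolongation, as `[[E₀ₗ, Eₗ₀], E₁₀] = -E₁₀`.
-/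

namespace LieSubalgebra

variable {L : Type u} [LieRing L] [LieAlgebra ℝ L]

def inducedGrading (m : LieSubalgebra ℝ L) (GD : ℤ → Submodule ℝ L) : ℤ → Submodule ℝ m :=
  fun d => (GD d).comap m.toSubmodule.subtype

end LieSubalgebra

namespace FP

theorem eqv_refl {M : Type u} [LieRing M] [LieAlgebra ℝ M] {l : ℕ} (g : ℤ → Submodule ℝ M) :
    ∀ x : FP M l, Eqv g x x
  | low _ => rfl
  | high F => fun j X _ => eqv_refl g (F j X)

variable {L : Type u} [LieRing L] [LieAlgebra ℝ L] {m : LieSubalgebra ℝ L} (l : ℕ)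
  (π : L →ₗ[ℝ] m)

/- For `y` of degree `d ≥ 0` in a graded Lie algebra `L` with negative part `m`, the action of
`ad y` on `m` as a formal prolongation element; values of negative degree are projected back
into `m` by `π`. -/
def adEmbed (d : ℤ) (y : L) : FP m l :=
  if 0 ≤ d then high fun j X => adEmbed (d - (j + 1)) ⁅y, (X : L)⁆ else low (π y)
termination_by (d + 1).toNat
decreasing_by omega

variable {l π}

theorem adEmbed_of_nonneg {d : ℤ} (hd : 0 ≤ d) (y : L) :
    adEmbed l π d y = high fun j X => adEmbed l π (d - (j + 1)) ⁅y, (X : L)⁆ := by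
  rw [adEmbed, if_pos hd]

theorem adEmbed_of_neg {d : ℤ} (hd : d < 0) (y : L) : adEmbed l π d y = low (π y) := by
  rw [adEmbed, if_neg (not_le.2 hd)]

theorem adEmbed_add (d : ℤ) (y z : L) :
    adEmbed l π d (y + z) = add (adEmbed l π d y) (adEmbed l π d z) := by
  by_cases hd : 0 ≤ d
  · simp only [adEmbed_of_nonneg hd, add, add_lie]
    congr 1; funext j X
    exact adEmbed_add _ _ _
  · simp only [adEmbed_of_neg (not_le.1 hd), add, map_add]
termination_by (d + 1).toNat
decreasing_by omega

theorem adEmbed_neg (d : ℤ) (y : L) : adEmbed l π d (-y) = neg (adEmbed l π d y) := by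
  by_cases hd : 0 ≤ d
  · simp only [adEmbed_of_nonneg hd, neg, neg_lie]
    congr 1; funext j X
    exact adEmbed_neg _ _
  · simp only [adEmbed_of_neg (not_le.1 hd), neg, map_neg]
termination_by (d + 1).toNat
decreasing_by omega

theorem adEmbed_smul (d : ℤ) (c : ℝ) (y : L) :
    adEmbed l π d (c • y) = smulR c (adEmbed l π d y) := by
  by_cases hd : 0 ≤ d
  · simp only [adEmbed_of_nonneg hd, smulR, smul_lie]
    congr 1; funext j X
    exact adEmbed_smul _ _ _
  · simp only [adEmbed_of_neg (not_le.1 hd), smulR, map_smul]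
termination_by (d + 1).toNat
decreasing_by omega

theorem isZero_adEmbed_zero (g : ℤ → Submodule ℝ m) (d : ℤ) :
    IsZero g (adEmbed l π d (0 : L)) := by
  by_cases hd : 0 ≤ d
  · rw [adEmbed_of_nonneg hd]
    intro j X _
    simp only [zero_lie]
    exact isZero_adEmbed_zero g _
  · rw [adEmbed_of_neg (not_le.1 hd), IsZero, map_zero]
termination_by (d + 1).toNat
decreasing_by omega

theorem br_adEmbed (hπ : ∀ x : m, π x = x) (j : Fin l) {d : ℤ} {y : L} (hy : d < 0 → y ∈ m)
    (Y : m) : br j (adEmbed l π d y) Y = adEmbed l π (d - (j + 1)) ⁅y, (Y : L)⁆ := by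
  by_cases hd : 0 ≤ d
  · rw [adEmbed_of_nonneg hd, br]
  · have hy := hy (not_le.1 hd)
    have hπy : π y = ⟨y, hy⟩ := hπ ⟨y, hy⟩
    rw [adEmbed_of_neg (not_le.1 hd), adEmbed_of_neg (by omega), br, hπy,
      hπ ⟨_, m.lie_mem hy Y.2⟩]
    rfl

variable {GD : ℤ → Submodule ℝ L}

theorem leibniz_adEmbed (hπ : ∀ x : m, π x = x)
    (hGD : ∀ i j : ℤ, ∀ x ∈ GD i, ∀ y ∈ GD j, ⁅x, y⁆ ∈ GD (i + j))
    (hneg : ∀ d < 0, GD d ≤ m.toSubmodule) {d : ℤ} {y : L} (hy : y ∈ GD d) {j j' : Fin l}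
    {X Y : m} (hX : X ∈ m.inducedGrading GD (-(j + 1)))
    (hY : Y ∈ m.inducedGrading GD (-(j' + 1))) :
    add (br j' (adEmbed l π (d - (j + 1)) ⁅y, (X : L)⁆) Y)
        (neg (br j (adEmbed l π (d - (j' + 1)) ⁅y, (Y : L)⁆) X)) =
      adEmbed l π (d - (j + 1) - (j' + 1)) ⁅y, ⁅(X : L), (Y : L)⁆⁆ := by
  have hyX : ⁅y, (X : L)⁆ ∈ GD (d - (j + 1)) := by
    simpa only [sub_eq_add_neg] using hGD _ _ y hy X hX
  have hyY : ⁅y, (Y : L)⁆ ∈ GD (d - (j' + 1)) := by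
    simpa only [sub_eq_add_neg] using hGD _ _ y hy Y hY
  rw [br_adEmbed hπ j' (fun h => hneg _ h hyX), br_adEmbed hπ j (fun h => hneg _ h hyY),
    ← adEmbed_neg, sub_right_comm d _ ((j : ℤ) + 1), ← adEmbed_add, leibniz_lie,
    ← lie_skew (X : L) ⁅y, (Y : L)⁆]

theorem proj_lie_I_eq (hπ : ∀ x : m, π x = x)
    (hGD : ∀ i j : ℤ, ∀ x ∈ GD i, ∀ y ∈ GD j, ⁅x, y⁆ ∈ GD (i + j))
    (hneg : ∀ d < 0, GD d ≤ m.toSubmodule) {J : L} (hJ : ∀ y ∈ GD 0, ⁅J, y⁆ = 0)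
    {I : m.inducedGrading GD (-1) →ₗ[ℝ] m.inducedGrading GD (-1)}
    (hI : ∀ X, ((I X : m) : L) = ⁅J, ((X : m) : L)⁆) {y : L} (hy : y ∈ GD 0)
    {X v : m.inducedGrading GD (-1)} (hXv : π ⁅y, ((X : m) : L)⁆ = v) :
    π ⁅y, ((I X : m) : L)⁆ = I v := by
  have hproj : ∀ Z : m.inducedGrading GD (-1),
      ((π ⁅y, ((Z : m) : L)⁆ : m) : L) = ⁅y, ((Z : m) : L)⁆ := fun Z =>
    congrArg Subtype.val (hπ ⟨_, hneg (-1) (by norm_num)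
      (by simpa only [zero_add] using hGD 0 (-1) y hy ((Z : m) : L) Z.2)⟩)
  apply Subtype.ext
  -- `ad y` commutes with `I = ad J` because `y` commutes with `J`
  rw [hproj, hI, hI, ← hXv, hproj, leibniz_lie, ← lie_skew y J, hJ y hy, neg_zero, zero_lie,
    zero_add]

theorem mem_adEmbed (hπ : ∀ x : m, π x = x)
    (hGD : ∀ i j : ℤ, ∀ x ∈ GD i, ∀ y ∈ GD j, ⁅x, y⁆ ∈ GD (i + j))
    (hneg : ∀ d < 0, GD d ≤ m.toSubmodule)
    (hvanish : ∀ d < -(l : ℤ), m.inducedGrading GD d = ⊥) {J : L} (hJ : ∀ y ∈ GD 0, ⁅J, y⁆ = 0)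
    {I : m.inducedGrading GD (-1) →ₗ[ℝ] m.inducedGrading GD (-1)}
    (hI : ∀ X, ((I X : m) : L) = ⁅J, ((X : m) : L)⁆) :
    ∀ (d : ℤ), ∀ y ∈ GD d, Mem (m.inducedGrading GD) I d (adEmbed l π d y)
  | d, y, hy => by
    rw [Mem]
    by_cases hd : 0 ≤ d
    · rw [if_pos hd]
      refine ⟨_, adEmbed_of_nonneg hd y,
        fun j => ⟨fun X hX => ?_, fun X _ Y _ => ?_, fun c X _ => ?_⟩,
        fun j j' X hX Y hY => ⟨fun _ => ?_, fun hge => ?_⟩, ?_⟩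
      · exact mem_adEmbed hπ hGD hneg hvanish hJ hI _ _
          (by simpa only [sub_eq_add_neg] using hGD _ _ y hy X hX)
      · rw [Submodule.coe_add, lie_add, adEmbed_add]
        exact eqv_refl _ _
      · rw [Submodule.coe_smul, lie_smul, adEmbed_smul]
        exact eqv_refl _ _
      · rw [leibniz_adEmbed hπ hGD hneg hy hX hY]
        convert eqv_refl _ _ using 2
        · push_cast
          ring
        · rw [LieSubalgebra.coe_bracket]
      · rw [leibniz_adEmbed hπ hGD hneg hy hX hY]
        have hXY : ⁅X, Y⁆ ∈ m.inducedGrading GD (-(j + 1) + -(j' + 1)) := hGD _ _ _ hX _ hY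
        rw [hvanish _ (by omega), Submodule.mem_bot] at hXY
        rw [← LieSubalgebra.coe_bracket, hXY, ZeroMemClass.coe_zero, lie_zero]
        exact isZero_adEmbed_zero _ _
      · rintro rfl j hj X v hXv
        have hdeg : (0 : ℤ) - ((j : ℕ) + 1) = -1 := by rw [hj]; norm_num
        rw [hdeg, adEmbed_of_neg (by norm_num)] at hXv ⊢
        exact proj_lie_I_eq hπ hGD hneg hJ hI hy hXv
    · rw [if_neg hd]
      have hym : y ∈ m := hneg d (not_le.1 hd) hy
      have hπy : π y = ⟨y, hym⟩ := hπ ⟨y, hym⟩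
      exact ⟨π y, adEmbed_of_neg (not_le.1 hd) y, by rw [hπy]; exact hy⟩
termination_by d => (d + 1).toNat
decreasing_by omega

theorem isZero_adEmbed_of_nonneg (g : ℤ → Submodule ℝ m) {d : ℤ} (hd : 0 ≤ d) (y : L) :
    IsZero g (adEmbed l π d y) ↔
      ∀ j : Fin l, ∀ X ∈ g (-(j + 1)), IsZero g (adEmbed l π (d - (j + 1)) ⁅y, (X : L)⁆) := by
  rw [adEmbed_of_nonneg hd, IsZero]

theorem isZero_adEmbed_of_neg (g : ℤ → Submodule ℝ m) {d : ℤ} (hd : d < 0) (y : L) :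
    IsZero g (adEmbed l π d y) ↔ π y = 0 := by
  rw [adEmbed_of_neg hd, IsZero]

end FP

attribute [local instance 100] LieRing.ofAssociativeRing LieAlgebra.ofAssociativeAlgebra

namespace DiagonalGrading

open Matrix

variable {n : ℕ}

abbrev Mat (n : ℕ) : Type := Matrix (Fin n) (Fin n) ℂ

def diagDeg (n : ℕ) (d : ℤ) : Submodule ℝ (Mat n) where
  carrier := {A | ∀ a b : Fin n, (b : ℤ) - a ≠ d → A a b = 0}
  add_mem' hA hB a b h := by rw [Matrix.add_apply, hA a b h, hB a b h, add_zero]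
  zero_mem' _ _ _ := rfl
  smul_mem' c A hA a b h := by rw [Matrix.smul_apply, hA a b h, smul_zero]

theorem mul_mem_diagDeg {i j : ℤ} {A B : Mat n} (hA : A ∈ diagDeg n i) (hB : B ∈ diagDeg n j) :
    A * B ∈ diagDeg n (i + j) := by
  intro a b hab
  rw [mul_apply]
  refine Finset.sum_eq_zero fun k _ => ?_
  by_cases hk : (k : ℤ) - a = i
  · rw [hB k b (by omega), mul_zero]
  · rw [hA a k hk, zero_mul]

theorem lie_mem_diagDeg (i j : ℤ) :
    ∀ A ∈ diagDeg n i, ∀ B ∈ diagDeg n j, ⁅A, B⁆ ∈ diagDeg n (i + j) :=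
  fun _ hA _ hB => by
    rw [Ring.lie_def]
    exact sub_mem (mul_mem_diagDeg hA hB) (add_comm i j ▸ mul_mem_diagDeg hB hA)

theorem single_mem_diagDeg {a b : Fin n} {d : ℤ} (hd : (b : ℤ) - a = d) (z : ℂ) :
    single a b z ∈ diagDeg n d := by
  rintro i j hij
  rw [single_apply_of_ne]
  rintro ⟨rfl, rfl⟩
  exact hij hd

def strictLower (n : ℕ) : LieSubalgebra ℝ (Mat n) where
  carrier := {A | ∀ a b : Fin n, a ≤ b → A a b = 0}
  add_mem' hA hB a b h := by rw [Matrix.add_apply, hA a b h, hB a b h, add_zero]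
  zero_mem' _ _ _ := rfl
  smul_mem' c A hA a b h := by rw [Matrix.smul_apply, hA a b h, smul_zero]
  lie_mem' {A B} hA hB a b hab := by
    have hmul : ∀ {X Y : Mat n}, (∀ a b : Fin n, a ≤ b → X a b = 0) →
        (∀ a b : Fin n, a ≤ b → Y a b = 0) → (X * Y) a b = 0 := fun hX hY =>
      (mul_apply ..).trans <| Finset.sum_eq_zero fun k _ => by
        by_cases hk : a ≤ k
        · rw [hX a k hk, zero_mul]
        · rw [hY k b ((not_le.1 hk).le.trans hab), mul_zero]
    rw [Ring.lie_def, Matrix.sub_apply, hmul hA hB, hmul hB hA, sub_zero]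

theorem diagDeg_le_strictLower {d : ℤ} (hd : d < 0) :
    diagDeg n d ≤ (strictLower n).toSubmodule :=
  fun _ hA a b hab => hA a b fun h => by have : (a : ℕ) ≤ b := hab; omega

def lowerSingle {a b : Fin n} (h : b < a) (z : ℂ) : strictLower n :=
  ⟨single a b z, fun _ _ hij => single_apply_of_ne _ _ _ _ _ fun ⟨hi, hj⟩ => by
    subst hi hj
    exact hij.not_gt h⟩

theorem coe_lowerSingle {a b : Fin n} (h : b < a) (z : ℂ) :
    (lowerSingle h z : Mat n) = single a b z :=
  rfl

theorem mem_of_forall_lowerSingle_mem (S : Submodule ℝ (strictLower n))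
    (hS : ∀ (a b : Fin n) (h : b < a) (z : ℂ), lowerSingle h z ∈ S) (A : strictLower n) :
    A ∈ S := by
  suffices (A : Mat n) ∈ S.map (strictLower n).toSubmodule.subtype by
    obtain ⟨B, hB, hBA⟩ := this
    exact Subtype.ext hBA ▸ hB
  rw [matrix_eq_sum_single (A : Mat n)]
  refine Submodule.sum_mem _ fun a _ => Submodule.sum_mem _ fun b _ => ?_
  by_cases hab : b < a
  · exact ⟨lowerSingle hab ((A : Mat n) a b), hS a b hab _, rfl⟩
  · rw [A.2 a b (not_lt.1 hab), single_zero]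
    exact Submodule.zero_mem _

def strictLowerProj (n : ℕ) : Mat n →ₗ[ℝ] strictLower n where
  toFun A := ⟨of fun a b => if a ≤ b then 0 else A a b, fun _ _ h => if_pos h⟩
  map_add' A B := by
    ext a b
    by_cases h : a ≤ b <;> simp [h]
  map_smul' c A := by
    ext a b
    by_cases h : a ≤ b <;> simp [h]

theorem strictLowerProj_coe (A : strictLower n) : strictLowerProj n A = A := by
  ext a b
  by_cases h : a ≤ b
  · simp [strictLowerProj, h, A.2 a b h]
  · simp [strictLowerProj, h]

def gr (n : ℕ) : ℤ → Submodule ℝ (strictLower n) :=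
  (strictLower n).inducedGrading (diagDeg n)

theorem lowerSingle_mem_gr {a b : Fin n} (h : b < a) {d : ℤ} (hd : (b : ℤ) - a = d) (z : ℂ) :
    lowerSingle h z ∈ gr n d :=
  show single a b z ∈ diagDeg n d from single_mem_diagDeg hd z

/- `ad J` multiplies the entry `(a, b)` by `±i` when `|a - b|` is odd and kills it when even. -/
def J (n : ℕ) : Mat n := diagonal fun a => (-1) ^ (a : ℕ) * Complex.I / 2

theorem lie_J_apply (A : Mat n) (a b : Fin n) :
    ⁅J n, A⁆ a b = ((-1) ^ (a : ℕ) - (-1) ^ (b : ℕ)) * Complex.I / 2 * A a b := by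
  simp only [Ring.lie_def, Matrix.sub_apply, J, diagonal_mul, mul_diagonal]
  ring

theorem J_mem_diagDeg_zero : J n ∈ diagDeg n 0 := fun a b hab => by
  rw [J, diagonal_apply_ne _ fun h => hab (by rw [h, sub_self])]

theorem lie_J_mem_diagDeg {d : ℤ} {A : Mat n} (hA : A ∈ diagDeg n d) :
    ⁅J n, A⁆ ∈ diagDeg n d := by
  simpa only [zero_add] using lie_mem_diagDeg 0 d _ J_mem_diagDeg_zero A hA

theorem lie_J_eq_zero_of_even {d : ℤ} (hd : Even d) {A : Mat n} (hA : A ∈ diagDeg n d) :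
    ⁅J n, A⁆ = 0 := by
  ext a b
  rw [lie_J_apply]
  by_cases hab : (b : ℤ) - a = d
  · have hpar : (a : ℕ) % 2 = (b : ℕ) % 2 := by
      obtain ⟨k, rfl⟩ := hd
      omega
    rw [neg_one_pow_eq_pow_mod_two (a : ℕ), hpar, ← neg_one_pow_eq_pow_mod_two, sub_self,
      zero_mul, zero_div, zero_mul, Matrix.zero_apply]
  · rw [hA a b hab, mul_zero, Matrix.zero_apply]

theorem lie_J_lie_J {A : Mat n} (hA : A ∈ diagDeg n (-1)) : ⁅J n, ⁅J n, A⁆⁆ = -A := by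
  ext a b
  rw [lie_J_apply, lie_J_apply, neg_apply]
  by_cases hab : (b : ℤ) - a = -1
  · have ha : (a : ℕ) = b + 1 := by omega
    have hsq : ((-1 : ℂ) ^ (b : ℕ)) ^ 2 = 1 := by
      rw [← pow_mul, pow_mul', neg_one_sq, one_pow]
    rw [ha, pow_succ]
    linear_combination (-(A a b)) * hsq + (((-1 : ℂ) ^ (b : ℕ)) ^ 2 * A a b) * Complex.I_sq
  · rw [hA a b hab, mul_zero, mul_zero, neg_zero]

def complexStructure (n : ℕ) : gr n (-1) →ₗ[ℝ] gr n (-1) where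
  toFun X :=
    ⟨⟨⁅J n, (X : Mat n)⁆, diagDeg_le_strictLower (by norm_num) (lie_J_mem_diagDeg X.2)⟩,
      lie_J_mem_diagDeg X.2⟩
  map_add' X Y := by
    ext : 2
    exact lie_add _ _ _
  map_smul' c X := by
    ext : 2
    exact lie_smul _ _ _

theorem coe_complexStructure (X : gr n (-1)) :
    ((complexStructure n X : strictLower n) : Mat n) = ⁅J n, (X : Mat n)⁆ :=
  rfl

theorem complexStructure_complexStructure (X : gr n (-1)) :
    complexStructure n (complexStructure n X) = -X := by
  ext : 2
  exact lie_J_lie_J X.2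

theorem lie_complexStructure (X Y : gr n (-1)) :
    ⁅(complexStructure n X : strictLower n), (complexStructure n Y : strictLower n)⁆ =
      ⁅(X : strictLower n), (Y : strictLower n)⁆ := by
  ext : 1
  have hXY : ⁅(X : Mat n), ⁅J n, (Y : Mat n)⁆⁆ ∈ diagDeg n (-2) :=
    lie_mem_diagDeg (-1) (-1) _ X.2 _ (lie_J_mem_diagDeg Y.2)
  rw [LieSubalgebra.coe_bracket, LieSubalgebra.coe_bracket, coe_complexStructure,
    coe_complexStructure, lie_lie, lie_J_lie_J (A := (Y : Mat n)) Y.2,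
    lie_J_eq_zero_of_even (by decide) hXY, lie_neg, zero_sub, neg_neg]

theorem iSupIndep_gr : iSupIndep (gr n) := by
  refine (iSupIndep_iff_finsetSum_eq_zero_imp_eq_zero _).2 fun s v hv hsum d hd => ?_
  ext a b
  by_cases hab : (b : ℤ) - a = d
  · have := congrArg (fun X : strictLower n => (X : Mat n) a b) hsum
    simp only [AddSubmonoidClass.coe_finsetSum, Matrix.sum_apply] at this
    rwa [Finset.sum_eq_single_of_mem (f := fun d' => (v d' : Mat n) a b) d hd
      fun d' hd' hne => hv d' hd' a b (hab ▸ hne.symm)] at this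
  · exact hv d hd a b hab

theorem iSup_gr : ⨆ d, gr n d = ⊤ :=
  eq_top_iff.2 fun A _ => mem_of_forall_lowerSingle_mem _
    (fun _ _ h z => Submodule.mem_iSup_of_mem _ (lowerSingle_mem_gr h rfl z)) A

theorem isInternal_gr : DirectSum.IsInternal (gr n) :=
  DirectSum.isInternal_submodule_of_iSupIndep_of_iSup_eq_top iSupIndep_gr iSup_gr

theorem gr_eq_bot {d : ℤ} (hd : d ≤ -n ∨ 0 ≤ d) : gr n d = ⊥ := by
  refine eq_bot_iff.2 fun X hX => ?_
  ext a b
  by_cases hab : (b : ℤ) - a = d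
  · exact X.2 a b (by have := b.isLt; have := a.isLt; rw [Fin.le_def]; omega)
  · exact hX a b hab

theorem lowerSingle_mem_lieSpan {S : LieSubalgebra ℝ (strictLower n)}
    (hS : (gr n (-1) : Set (strictLower n)) ⊆ S) (k : ℕ) :
    ∀ {a b : Fin n} (h : b < a), (a : ℕ) = b + k + 1 → ∀ z, lowerSingle h z ∈ S := by
  induction k with
  | zero => exact fun h hab z => hS (lowerSingle_mem_gr h (by omega) z)
  | succ k ih =>
    intro a b h hab z
    set c : Fin n := ⟨b + k + 1, by omega⟩
    have hca : c < a := by rw [Fin.lt_def]; simp [c]; omega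
    have hbc : b < c := by rw [Fin.lt_def]; simp [c]
    have hsplit : lowerSingle h z = ⁅lowerSingle hca 1, lowerSingle hbc z⁆ := by
      ext : 1
      rw [LieSubalgebra.coe_bracket, coe_lowerSingle, coe_lowerSingle, coe_lowerSingle,
        Ring.lie_def, single_mul_single_same, single_mul_single_of_ne _ _ _ _ h.ne, one_mul,
        sub_zero]
    rw [hsplit]
    exact S.lie_mem (hS (lowerSingle_mem_gr hca (by simp [c]; omega) 1)) (ih hbc rfl z)

theorem lieSpan_gr_neg_one : LieSubalgebra.lieSpan ℝ (strictLower n) (gr n (-1)) = ⊤ := by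
  rw [eq_top_iff]
  intro A _
  exact mem_of_forall_lowerSingle_mem (LieSubalgebra.lieSpan ℝ _ _).toSubmodule
    (fun a b h => lowerSingle_mem_lieSpan LieSubalgebra.subset_lieSpan (a - b - 1) h
      (by rw [Fin.lt_def] at h; omega)) A

theorem gr_ne_bot {a b : Fin n} (h : b < a) {d : ℤ} (hd : (b : ℤ) - a = d) : gr n d ≠ ⊥ := by
  intro hbot
  have hmem := lowerSingle_mem_gr h hd 1
  rw [hbot, Submodule.mem_bot] at hmem
  simpa [coe_lowerSingle] using congrArg (fun X : strictLower n => (X : Mat n) a b) hmem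

theorem eq_zero_of_forall_lie_eq_zero (hn : 3 ≤ n) {X : gr n (-1)}
    (hX : ∀ Y : gr n (-1), ⁅(X : strictLower n), (Y : strictLower n)⁆ = 0) : X = 0 := by
  ext a b
  by_cases hab : (b : ℤ) - a = -1
  swap
  · exact X.2 a b hab
  have hentry : ∀ {p q : Fin n} (hqp : q < p), (q : ℤ) - p = -1 → ∀ i j : Fin n,
      ((X : Mat n) * single p q (1 : ℂ)) i j - (single p q (1 : ℂ) * (X : Mat n)) i j = 0 := by
    intro p q hqp hpq i j
    simpa [coe_lowerSingle, Ring.lie_def] using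
      congrArg (fun Z : strictLower n => (Z : Mat n) i j)
        (hX ⟨lowerSingle hqp 1, lowerSingle_mem_gr hqp hpq 1⟩)
  rcases Nat.eq_zero_or_pos (b : ℕ) with hb | hb
  · set c : Fin n := ⟨2, by omega⟩
    have hac : a < c := by rw [Fin.lt_def]; simp [c]; omega
    have := hentry hac (by simp [c]; omega) c b
    rwa [mul_single_apply_of_ne _ _ _ _ _ (by rw [ne_eq, Fin.ext_iff]; omega),
      single_mul_apply_same, one_mul, zero_sub, neg_eq_zero] at this
  · set c : Fin n := ⟨b - 1, by omega⟩
    have hcb : c < b := by rw [Fin.lt_def]; simp [c]; omega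
    have := hentry hcb (by simp [c]; omega) a c
    rwa [mul_single_apply_same,
      single_mul_apply_of_ne _ _ _ _ _ (by rw [ne_eq, Fin.ext_iff]; omega), mul_one,
      sub_zero] at this

theorem isPCF {l : ℕ} (hl : 2 ≤ l) : IsPCF l (gr (l + 1)) (complexStructure (l + 1)) where
  findim := inferInstanceAs (FiniteDimensional ℝ (strictLower (l + 1)).toSubmodule)
  isInternal := isInternal_gr
  supp _ _ := gr_eq_bot (by omega)
  grading i j X hX Y hY := lie_mem_diagDeg i j _ hX _ hY
  nontriv := gr_ne_bot (a := ⟨l, by omega⟩) (b := ⟨0, by omega⟩) (by simp [Fin.lt_def]; omega)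
    (by simp)
  generated := lieSpan_gr_neg_one
  I_sq := complexStructure_complexStructure
  I_br := lie_complexStructure
  nondeg _ := eq_zero_of_forall_lie_eq_zero (by omega)

theorem mem_adEmbed {l : ℕ} {d : ℤ} {y : Mat (l + 1)} (hy : y ∈ diagDeg (l + 1) d) :
    FP.Mem (gr (l + 1)) (complexStructure (l + 1)) d
      (FP.adEmbed l (strictLowerProj (l + 1)) d y) :=
  FP.mem_adEmbed strictLowerProj_coe lie_mem_diagDeg (fun _ => diagDeg_le_strictLower)
    (fun _ hd => gr_eq_bot (by omega)) (fun _ => lie_J_eq_zero_of_even .zero)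
    coe_complexStructure d y hy

theorem lie_lie_single {a b c : Fin n} (hab : a ≠ b) (hca : c ≠ a) (hcb : c ≠ b) :
    ⁅⁅single a b (1 : ℂ), single b a (1 : ℂ)⁆, single c a (1 : ℂ)⁆ = -single c a (1 : ℂ) := by
  simp [Ring.lie_def, sub_mul, mul_sub, single_mul_single_of_ne, hab, hca.symm, hcb.symm]

theorem not_isZero_adEmbed_single {l : ℕ} (hl : 2 ≤ l) :
    ¬FP.IsZero (gr (l + 1))
      (FP.adEmbed l (strictLowerProj (l + 1)) l (single 0 (Fin.last l) 1)) := by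
  set top : Fin (l + 1) := Fin.last l
  set one : Fin (l + 1) := ⟨1, by omega⟩
  have htop : (0 : Fin (l + 1)) < top := by simp [top, Fin.lt_def]; omega
  have hone : (0 : Fin (l + 1)) < one := by simp [one, Fin.lt_def]
  have hone_top : one ≠ top := by simp [one, top, Fin.ext_iff]; omega
  intro hzero
  have h1 := (FP.isZero_adEmbed_of_nonneg _ (by positivity) _).1 hzero ⟨l - 1, by omega⟩
    (lowerSingle htop 1) (lowerSingle_mem_gr htop (by simp [top]; omega) 1)
  rw [show (l : ℤ) - (((l - 1 : ℕ) : ℤ) + 1) = 0 by omega] at h1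
  have h2 := (FP.isZero_adEmbed_of_nonneg _ le_rfl _).1 h1 ⟨0, by omega⟩
    (lowerSingle hone 1) (lowerSingle_mem_gr hone (by simp [one]) 1)
  rw [FP.isZero_adEmbed_of_neg _ (by norm_num), coe_lowerSingle, coe_lowerSingle,
    lie_lie_single htop.ne hone.ne' hone_top, ← coe_lowerSingle hone, map_neg,
    strictLowerProj_coe, neg_eq_zero] at h2
  simpa [coe_lowerSingle] using
    congrArg (fun X : strictLower (l + 1) => (X : Mat (l + 1)) one 0) h2

end DiagonalGrading

/-- For every `l ≥ 2` there exists a nondegenerate pseudo-complex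
fundamental graded Lie algebra `(m = g_{-l} ⊕ ⋯ ⊕ g_{-1}, I)` of type `l` whose Tanaka
prolongation `(g_i)_{i ≥ 0}` satisfies `g_l ≠ 0` (in particular, there exist weighted
homogeneous polynomial models of every length `l ≥ 2` admitting infinitesimal CR
automorphisms of positive weighted degree). -/
theorem exists_pcf_with_nonzero_top_prolongation (l : ℕ) (hl : 2 ≤ l) :
    ∃ P : PCFBundle l, P.prolongDegLNonzero := by
  open DiagonalGrading Matrix in
  exact ⟨⟨strictLower (l + 1), gr (l + 1), complexStructure (l + 1), isPCF hl⟩,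
    FP.adEmbed l (strictLowerProj (l + 1)) l (single 0 (Fin.last l) 1),
    mem_adEmbed (single_mem_diagDeg (by simp) 1), not_isZero_adEmbed_single hl⟩

end
end
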